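/- arXiv:2503.23142 — 5 statements merged into one kernel-verified Lean document; each statement's English description precedes it below -/
import Mathlib

section
/- Let F : 𝓓_p → [0,∞] and G : 𝓓_q → [0,∞] be symmetric functions, where 𝓓_k = { (j_1,...,j_k) ∈ ℤ₊^k : all j_i distinct }. Then (⋁_{i ∈ 𝓓_p} F(i)) · (⋁_{j ∈ 𝓓_q} G(j)) = ⋁_{r=0}^{p∧q} ⋁_{k ∈ 𝓓_{p+q-r}} U_r(k), where U_r(k) = F(k_1,...,k_r, k_{r+1},...,k_p) · G(k_1,...,k_r, k_{p+1},...,k_{p+q-r}). -/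
open scoped ENNReal

set_option maxHeartbeats 1600000

lemma comp_perm_of_range_eq {n : ℕ} {α : Type*} {u v : Fin n → α}
    (hu : Function.Injective u) (hv : Function.Injective v)
    (h : Set.range u = Set.range v) : ∃ σ : Equiv.Perm (Fin n), u ∘ σ = v := by
  refine ⟨(Equiv.ofInjective v hv).trans ((Equiv.setCongr h.symm).trans
    (Equiv.ofInjective u hu).symm), ?_⟩
  funext x
  simp [Equiv.setCongr, Equiv.apply_ofInjective_symm]
  rfl

/-- Product formula for suprema over tuples of distinct indices (Lemma 6.1):
for symmetric `F : 𝓓_p → [0,∞]`, `G : 𝓓_q → [0,∞]`,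
`(⋁_{i∈𝓓_p} F(i)) ⬝ (⋁_{j∈𝓓_q} G(j)) = ⋁_{r=0}^{p∧q} ⋁_{k∈𝓓_{p+q-r}} U_r(k)`, where
`U_r(k) = F(k_1,…,k_r,k_{r+1},…,k_p) G(k_1,…,k_r,k_{p+1},…,k_{p+q-r})`. -/
theorem stmt6 (p q : ℕ) (hp : 0 < p) (hq : 0 < q)
    (F : (Fin p → ℕ+) → ℝ≥0∞) (G : (Fin q → ℕ+) → ℝ≥0∞)
    (hF : ∀ (σ : Equiv.Perm (Fin p)) (i : Fin p → ℕ+), F (i ∘ σ) = F i)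
    (hG : ∀ (σ : Equiv.Perm (Fin q)) (j : Fin q → ℕ+), G (j ∘ σ) = G j) :
    (⨆ i : {i : Fin p → ℕ+ // Function.Injective i}, F i.1) *
      (⨆ j : {j : Fin q → ℕ+ // Function.Injective j}, G j.1) =
    ⨆ r : Fin (min p q + 1),
      ⨆ k : {k : Fin (p + q - r.1) → ℕ+ // Function.Injective k},
        F (fun a : Fin p => k.1 ⟨a.1, by have := r.isLt; have := a.isLt; omega⟩) *
        G (fun b : Fin q =>
          if h : (b : ℕ) < r.1 then
            k.1 ⟨b.1, by have := r.isLt; have := b.isLt; omega⟩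
          else
            k.1 ⟨p + b.1 - r.1, by have := r.isLt; have := b.isLt; omega⟩) := by
  rw [ENNReal.iSup_mul]
  simp_rw [ENNReal.mul_iSup]
  apply le_antisymm
  · refine iSup_le fun i => iSup_le fun j => ?_
    obtain ⟨i, hi⟩ := i
    obtain ⟨j, hj⟩ := j
    classical
    set A : Finset ℕ+ := Finset.image i Finset.univ with hAdef
    set B : Finset ℕ+ := Finset.image j Finset.univ with hBdef
    set S : Finset ℕ+ := A ∩ B with hSdef
    have hA : A.card = p := by
      rw [hAdef, Finset.card_image_of_injective _ hi, Finset.card_univ, Fintype.card_fin]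
    have hB : B.card = q := by
      rw [hBdef, Finset.card_image_of_injective _ hj, Finset.card_univ, Fintype.card_fin]
    set r : ℕ := S.card with hrdef
    have hrp : r ≤ p := hA ▸ Finset.card_le_card Finset.inter_subset_left
    have hrq : r ≤ q := hB ▸ Finset.card_le_card Finset.inter_subset_right
    have hAS : (A \ S).card = p - r := by
      rw [Finset.card_sdiff_of_subset Finset.inter_subset_left, hA]
    have hBS : (B \ S).card = q - r := by
      rw [Finset.card_sdiff_of_subset Finset.inter_subset_right, hB]
    set s : Fin r → ℕ+ := fun m => ((S.orderIsoOfFin rfl) m : ℕ+) with hsdef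
    set a : Fin (p - r) → ℕ+ := fun m => (((A \ S).orderIsoOfFin hAS) m : ℕ+) with hadef
    set c : Fin (q - r) → ℕ+ := fun m => (((B \ S).orderIsoOfFin hBS) m : ℕ+) with hcdef
    have hs_mem : ∀ m, s m ∈ S := fun m => ((S.orderIsoOfFin rfl) m).2
    have ha_mem : ∀ m, a m ∈ A \ S := fun m => (((A \ S).orderIsoOfFin hAS) m).2
    have hc_mem : ∀ m, c m ∈ B \ S := fun m => (((B \ S).orderIsoOfFin hBS) m).2
    have hs_inj : Function.Injective s := fun m m' h =>
      (S.orderIsoOfFin rfl).injective (Subtype.ext h)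
    have ha_inj : Function.Injective a := fun m m' h =>
      ((A \ S).orderIsoOfFin hAS).injective (Subtype.ext h)
    have hc_inj : Function.Injective c := fun m m' h =>
      ((B \ S).orderIsoOfFin hBS).injective (Subtype.ext h)
    have hs_surj : ∀ x ∈ S, ∃ m, s m = x := fun x hx =>
      ⟨(S.orderIsoOfFin rfl).symm ⟨x, hx⟩,
        congrArg Subtype.val ((S.orderIsoOfFin rfl).apply_symm_apply ⟨x, hx⟩)⟩
    have ha_surj : ∀ x ∈ A \ S, ∃ m, a m = x := fun x hx =>
      ⟨((A \ S).orderIsoOfFin hAS).symm ⟨x, hx⟩,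
        congrArg Subtype.val (((A \ S).orderIsoOfFin hAS).apply_symm_apply ⟨x, hx⟩)⟩
    have hc_surj : ∀ x ∈ B \ S, ∃ m, c m = x := fun x hx =>
      ⟨((B \ S).orderIsoOfFin hBS).symm ⟨x, hx⟩,
        congrArg Subtype.val (((B \ S).orderIsoOfFin hBS).apply_symm_apply ⟨x, hx⟩)⟩
    have hdisj : ∀ x : ℕ+, ¬(x ∈ S ∧ x ∈ A \ S) ∧ ¬(x ∈ S ∧ x ∈ B \ S) ∧
        ¬(x ∈ A \ S ∧ x ∈ B \ S) := by
      intro x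
      simp only [Finset.mem_sdiff, hSdef, Finset.mem_inter]
      tauto
    set k : Fin (p + q - r) → ℕ+ := fun m =>
      if h1 : m.1 < r then s ⟨m.1, h1⟩
      else if h2 : m.1 < p then a ⟨m.1 - r, by omega⟩
      else c ⟨m.1 - p, by have := m.isLt; omega⟩ with hkdef
    have hcase : ∀ x : Fin (p + q - r), (x.1 < r ∧ k x ∈ S) ∨
        (r ≤ x.1 ∧ x.1 < p ∧ k x ∈ A \ S) ∨ (p ≤ x.1 ∧ k x ∈ B \ S) := by
      intro x
      simp only [hkdef]
      split_ifs with h1 h2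
      · exact Or.inl ⟨h1, hs_mem _⟩
      · exact Or.inr (Or.inl ⟨by omega, h2, ha_mem _⟩)
      · exact Or.inr (Or.inr ⟨by omega, hc_mem _⟩)
    have hk : Function.Injective k := by
      intro m m' heq
      rcases hcase m with ⟨hm, hmem⟩ | ⟨hm1, hm2, hmem⟩ | ⟨hm, hmem⟩ <;>
        rcases hcase m' with ⟨hm', hmem'⟩ | ⟨hm1', hm2', hmem'⟩ | ⟨hm', hmem'⟩
      · simp only [hkdef] at heq
        rw [dif_pos hm, dif_pos hm'] at heq
        exact Fin.ext (congrArg Fin.val (hs_inj heq) : _)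
      · exact absurd ⟨hmem, heq ▸ hmem'⟩ (hdisj (k m)).1
      · exact absurd ⟨hmem, heq ▸ hmem'⟩ (hdisj (k m)).2.1
      · exact absurd ⟨hmem', heq ▸ hmem⟩ (hdisj (k m')).1
      · simp only [hkdef] at heq
        rw [dif_neg (by omega), dif_pos hm2, dif_neg (by omega), dif_pos hm2'] at heq
        have := congrArg Fin.val (ha_inj heq)
        simp only at this
        exact Fin.ext (by omega)
      · exact absurd ⟨hmem, heq ▸ hmem'⟩ (hdisj (k m)).2.2
      · exact absurd ⟨hmem', heq ▸ hmem⟩ (hdisj (k m')).2.1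
      · exact absurd ⟨hmem', heq ▸ hmem⟩ (hdisj (k m')).2.2
      · simp only [hkdef] at heq
        rw [dif_neg (by omega), dif_neg (by omega), dif_neg (by omega), dif_neg (by omega)] at heq
        have := congrArg Fin.val (hc_inj heq)
        simp only at this
        exact Fin.ext (by omega)
    set i' : Fin p → ℕ+ := fun a' => k ⟨a'.1, by have := a'.isLt; omega⟩ with hi'def
    have hi' : Function.Injective i' := by
      intro x y h
      exact Fin.ext (congrArg Fin.val (hk h) : _)
    have hrangei : Set.range i = Set.range i' := by
      have h1 : Set.range i = ↑A := by
        rw [hAdef, Finset.coe_image, Finset.coe_univ, Set.image_univ]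
      rw [h1]
      ext x
      constructor
      · intro hx
        by_cases hxS : x ∈ S
        · obtain ⟨m, hm⟩ := hs_surj x hxS
          refine ⟨⟨m.1, by have := m.isLt; omega⟩, ?_⟩
          simp only [hi'def, hkdef]
          rw [dif_pos m.isLt]
          exact (congrArg s (Fin.eta m m.isLt)).trans hm
        · obtain ⟨m, hm⟩ := ha_surj x (Finset.mem_sdiff.2 ⟨hx, hxS⟩)
          refine ⟨⟨r + m.1, by have := m.isLt; omega⟩, ?_⟩
          simp only [hi'def, hkdef]
          rw [dif_neg (by omega), dif_pos (by have := m.isLt; omega)]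
          have : (⟨r + m.1 - r, by have := m.isLt; omega⟩ : Fin (p - r)) = m :=
            Fin.ext (show r + m.1 - r = m.1 by omega)
          rw [this, hm]
      · rintro ⟨a', rfl⟩
        simp only [hi'def, hkdef]
        split_ifs with h1 h2
        · exact Finset.mem_of_mem_inter_left (hs_mem _)
        · exact (Finset.mem_sdiff.1 (ha_mem _)).1
        · exact absurd a'.isLt (by omega)
    set j' : Fin q → ℕ+ := fun b =>
      if h : b.1 < r then k ⟨b.1, by omega⟩
      else k ⟨p + b.1 - r, by have := b.isLt; omega⟩ with hj'def
    have hj' : Function.Injective j' := by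
      intro x y h
      simp only [hj'def] at h
      split_ifs at h with h1 h2 h2 <;>
        · have := congrArg Fin.val (hk h)
          simp only at this
          exact Fin.ext (by omega)
    have hrangej : Set.range j = Set.range j' := by
      have h1 : Set.range j = ↑B := by
        rw [hBdef, Finset.coe_image, Finset.coe_univ, Set.image_univ]
      rw [h1]
      ext x
      constructor
      · intro hx
        by_cases hxS : x ∈ S
        · obtain ⟨m, hm⟩ := hs_surj x hxS
          refine ⟨⟨m.1, by have := m.isLt; omega⟩, ?_⟩
          simp only [hj'def, hkdef]
          rw [dif_pos m.isLt, dif_pos m.isLt]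
          exact (congrArg s (Fin.eta m m.isLt)).trans hm
        · obtain ⟨m, hm⟩ := hc_surj x (Finset.mem_sdiff.2 ⟨hx, hxS⟩)
          refine ⟨⟨r + m.1, by have := m.isLt; omega⟩, ?_⟩
          simp only [hj'def, hkdef]
          rw [dif_neg (by omega), dif_neg (by omega), dif_neg (by omega)]
          have : (⟨p + (r + m.1) - r - p, by have := m.isLt; omega⟩ : Fin (q - r)) = m :=
            Fin.ext (show p + (r + m.1) - r - p = m.1 by omega)
          rw [this, hm]
      · rintro ⟨b, rfl⟩
        simp only [hj'def, hkdef]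
        split_ifs <;>
          first
            | exact Finset.mem_of_mem_inter_right (hs_mem _)
            | exact (Finset.mem_sdiff.1 (hc_mem _)).1
            | (exfalso; omega)
    obtain ⟨σ, hσ⟩ := comp_perm_of_range_eq hi hi' hrangei
    obtain ⟨τ, hτ⟩ := comp_perm_of_range_eq hj hj' hrangej
    have hFi : F i = F i' := ((hF σ i).symm).trans (congrArg F hσ)
    have hGj : G j = G j' := ((hG τ j).symm).trans (congrArg G hτ)
    rw [hFi, hGj]
    exact le_iSup_of_le ⟨r, by omega⟩ (le_iSup_of_le ⟨k, hk⟩ le_rfl)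
  · refine iSup_le fun r' => iSup_le fun k => ?_
    have hi0 : Function.Injective (fun a : Fin p =>
        k.1 ⟨a.1, by have := r'.isLt; have := a.isLt; omega⟩) := by
      intro x y h
      exact Fin.ext (congrArg Fin.val (k.2 h) : _)
    have hj0 : Function.Injective (fun b : Fin q =>
        if h : (b : ℕ) < r'.1 then
          k.1 ⟨b.1, by have := r'.isLt; have := b.isLt; omega⟩
        else
          k.1 ⟨p + b.1 - r'.1, by have := r'.isLt; have := b.isLt; omega⟩) := by
      intro x y h
      dsimp only at h
      have hr' := r'.isLt
      by_cases h1 : (x : ℕ) < r'.1 <;> by_cases h2 : (y : ℕ) < r'.1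
      · rw [dif_pos h1, dif_pos h2] at h
        have := congrArg Fin.val (k.2 h)
        simp only at this
        exact Fin.ext (by omega)
      · rw [dif_pos h1, dif_neg h2] at h
        have := congrArg Fin.val (k.2 h)
        simp only at this
        exact Fin.ext (by omega)
      · rw [dif_neg h1, dif_pos h2] at h
        have := congrArg Fin.val (k.2 h)
        simp only at this
        exact Fin.ext (by omega)
      · rw [dif_neg h1, dif_neg h2] at h
        have := congrArg Fin.val (k.2 h)
        simp only at this
        exact Fin.ext (by omega)
    exact le_iSup_of_le ⟨_, hi0⟩ (le_iSup_of_le ⟨_, hj0⟩ le_rfl)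
end

section
/- Let X and Y be independent nonnegative random variables with E[X] < ∞, and suppose P(Y ≤ t) ~ t·L(t) as t ↓ 0 for a positive slowly varying function L that is non-increasing in a neighborhood of 0. Then P(Y ≤ tX)/P(Y ≤ t) → E[X] as t ↓ 0. -/
/-!
Write `F` for the distribution function of `Y`. Since `F t ~ t L(t)` and `L` is slowly varying,
`G_t(x) := F(t x) / F(t) → x` for every `x > 0`, and also at `x = 0` because `F` cannot jump
at `0`. Monotonicity of `F` and of `L` near `0` gives the bound `G_t(x) ≤ C (x + 1)` for small `t`.
By independence `P(Y ≤ t X) / F(t) = E[G_t(X)]`, which tends to `E[X]` by dominated convergence.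
-/

open MeasureTheory Filter ProbabilityTheory Set Topology

def SlowlyVaryingAtZero (L : ℝ → ℝ) : Prop :=
  ∀ x : ℝ, 0 < x → Tendsto (fun t => L (t * x) / L t) (𝓝[>] 0) (𝓝 1)

lemma tendsto_mul_const_nhdsGT_zero {x : ℝ} (hx : 0 < x) :
    Tendsto (· * x) (𝓝[>] (0 : ℝ)) (𝓝[>] 0) := by
  refine tendsto_nhdsWithin_iff.2 ⟨?_, ?_⟩
  · simpa using ((continuous_mul_const x).tendsto 0).mono_left nhdsWithin_le_nhds
  · filter_upwards [self_mem_nhdsWithin] with t (ht : 0 < t)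
    exact mul_pos ht hx

section RegularVariation

variable {F L : ℝ → ℝ}

theorem SlowlyVaryingAtZero.tendsto_div_of_tendsto_div_mul (hL : SlowlyVaryingAtZero L)
    (hLpos : ∀ t, 0 < t → 0 < L t)
    (hF : Tendsto (fun t => F t / (t * L t)) (𝓝[>] 0) (𝓝 1)) :
    ∀ x, 0 < x → Tendsto (fun t => F (t * x) / F t) (𝓝[>] 0) (𝓝 x) := by
  intro x hx
  have hFx := hF.comp (tendsto_mul_const_nhdsGT_zero hx)
  have hFinv : Tendsto (fun t => t * L t / F t) (𝓝[>] 0) (𝓝 1) := by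
    simpa using hF.inv₀ one_ne_zero
  have hprod := ((hFx.mul (hL x hx)).mul_const x).mul hFinv
  rw [one_mul, one_mul, mul_one] at hprod
  refine hprod.congr' ?_
  filter_upwards [hF.eventually_ne one_ne_zero, self_mem_nhdsWithin] with t hne (ht : 0 < t)
  have hFt : F t ≠ 0 := fun h => hne (by simp [h])
  have hLt := (hLpos t ht).ne'
  have hLtx := (hLpos (t * x) (mul_pos ht hx)).ne'
  simp only [Function.comp_apply]
  field_simp

theorem eq_zero_of_tendsto_div (hmono : Monotone F) (hle : ∀ s, F s ≤ 1) (h0 : 0 ≤ F 0)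
    (hratio : ∀ x, 0 < x → Tendsto (fun t => F (t * x) / F t) (𝓝[>] 0) (𝓝 x)) :
    F 0 = 0 := by
  by_contra hne
  have hpos : 0 < F 0 := h0.lt_of_ne' hne
  have hlt := (hratio (F 0 / 2) (by positivity)).eventually_lt_const (half_lt_self hpos)
  obtain ⟨t, ht, (htpos : 0 < t)⟩ := (hlt.and self_mem_nhdsWithin).exists
  have hFt : 0 < F t := hpos.trans_le (hmono htpos.le)
  have : F 0 ≤ F (t * (F 0 / 2)) / F t := by
    rw [le_div_iff₀ hFt]
    calc F 0 * F t ≤ F 0 := mul_le_of_le_one_right h0 (hle t)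
      _ ≤ F (t * (F 0 / 2)) := hmono (by positivity)
  linarith

theorem div_le_mul_add_one_of_antitoneOn {t₁ t x : ℝ} (hmono : Monotone F) (hle : ∀ s, F s ≤ 1)
    (hLpos : ∀ t, 0 < t → 0 < L t) (hanti : AntitoneOn L (Ioo 0 t₁))
    (hbounds : ∀ s ∈ Ioo 0 t₁, s * L s / 2 ≤ F s ∧ F s ≤ 2 * (s * L s))
    (ht : t ∈ Ioc 0 (t₁ / 2)) (hx : 0 ≤ x) :
    F (t * x) / F t ≤ max 4 (2 / (t₁ * L (t₁ / 2))) * (x + 1) := by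
  set C := max 4 (2 / (t₁ * L (t₁ / 2)))
  obtain ⟨htpos, htle⟩ := ht
  have ht₁ : 0 < t₁ := by linarith
  have hLt := hLpos t htpos
  have hc := hLpos (t₁ / 2) (by positivity)
  have hFt_lo := (hbounds t ⟨htpos, by linarith⟩).1
  have hFt : 0 < F t := lt_of_lt_of_le (by positivity) hFt_lo
  have hC4 : 4 ≤ C := le_max_left _ _
  rcases le_or_gt x 1 with hx1 | hx1
  · calc F (t * x) / F t ≤ 1 :=
          (div_le_one hFt).2 (hmono (mul_le_of_le_one_right htpos.le hx1))
      _ ≤ C * (x + 1) := by nlinarith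
  rcases lt_or_ge (t * x) t₁ with htx | htx
  · -- moderate `x`: `L (t x) ≤ L t` turns the two-sided bounds into `G ≤ 4 x`
    have htxpos : 0 < t * x := by positivity
    have hLtx : L (t * x) ≤ L t :=
      hanti ⟨htpos, by linarith⟩ ⟨htxpos, htx⟩ (le_mul_of_one_le_right htpos.le hx1.le)
    have hFtx := (hbounds (t * x) ⟨htxpos, htx⟩).2
    calc F (t * x) / F t ≤ 4 * x := by
          rw [div_le_iff₀ hFt]
          nlinarith [mul_le_mul_of_nonneg_left hLtx htxpos.le]
      _ ≤ C * (x + 1) := by nlinarith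
  · -- large `x`: `F ≤ 1`, and `F t ≥ t L(t₁/2) / 2` with `t ≥ t₁ / x`
    have hLc : L (t₁ / 2) ≤ L t := hanti ⟨htpos, by linarith⟩ ⟨by positivity, by linarith⟩ htle
    have hmax : 2 / (t₁ * L (t₁ / 2)) ≤ C := le_max_right _ _
    calc F (t * x) / F t ≤ 1 / (t * L (t₁ / 2) / 2) := by
          gcongr
          · exact hle _
          · nlinarith
      _ ≤ 2 / (t₁ * L (t₁ / 2)) * x := by
          rw [div_le_iff₀ (by positivity), div_mul_eq_mul_div, div_mul_eq_mul_div,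
            le_div_iff₀ (by positivity)]
          nlinarith
      _ ≤ C * (x + 1) := by nlinarith [mul_le_mul_of_nonneg_right hmax hx]

theorem eventually_half_le_and_le_two_mul (hLpos : ∀ t, 0 < t → 0 < L t)
    (hF : Tendsto (fun t => F t / (t * L t)) (𝓝[>] 0) (𝓝 1)) :
    ∀ᶠ t in 𝓝[>] 0, t * L t / 2 ≤ F t ∧ F t ≤ 2 * (t * L t) := by
  filter_upwards [hF.eventually_const_lt one_half_lt_one, hF.eventually_lt_const one_lt_two,
    self_mem_nhdsWithin] with t hlo hhi (ht : 0 < t)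
  have htL : 0 < t * L t := mul_pos ht (hLpos t ht)
  rw [lt_div_iff₀ htL] at hlo
  rw [div_lt_iff₀ htL] at hhi
  constructor <;> linarith

theorem exists_eventually_div_le_mul_add_one (hmono : Monotone F) (hle : ∀ s, F s ≤ 1)
    (hLpos : ∀ t, 0 < t → 0 < L t) (hLmono : ∃ δ, 0 < δ ∧ AntitoneOn L (Ioo 0 δ))
    (hF : Tendsto (fun t => F t / (t * L t)) (𝓝[>] 0) (𝓝 1)) :
    ∃ C, ∀ᶠ t in 𝓝[>] 0, ∀ x, 0 ≤ x → F (t * x) / F t ≤ C * (x + 1) := by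
  obtain ⟨δ, hδ, hanti⟩ := hLmono
  obtain ⟨u, hu, hbounds⟩ :=
    mem_nhdsGT_iff_exists_Ioo_subset.1 (eventually_half_le_and_le_two_mul hLpos hF)
  have ht₁ : 0 < min u δ := lt_min hu hδ
  refine ⟨max 4 (2 / (min u δ * L (min u δ / 2))), ?_⟩
  filter_upwards [Ioo_mem_nhdsGT (half_pos ht₁)] with t ht x hx
  exact div_le_mul_add_one_of_antitoneOn hmono hle hLpos
    (hanti.mono (Ioo_subset_Ioo_right (min_le_right _ _)))
    (fun s hs => hbounds (Ioo_subset_Ioo_right (min_le_left _ _) hs)) (Ioo_subset_Ioc_self ht) hx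

end RegularVariation

theorem tendsto_integral_comp_of_le_mul_add_one {Ω ι : Type*} [MeasurableSpace Ω]
    {μ : Measure Ω} [IsFiniteMeasure μ] {l : Filter ι} [l.IsCountablyGenerated]
    {G : ι → ℝ → ℝ} {X : Ω → ℝ} {C : ℝ} (hGmeas : ∀ i, Measurable (G i)) (hGnn : ∀ i x, 0 ≤ G i x)
    (hX : Integrable X μ) (hXnn : ∀ᵐ ω ∂μ, 0 ≤ X ω)
    (hlim : ∀ x, 0 ≤ x → Tendsto (fun i => G i x) l (𝓝 x))
    (hbound : ∀ᶠ i in l, ∀ x, 0 ≤ x → G i x ≤ C * (x + 1)) :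
    Tendsto (fun i => ∫ ω, G i (X ω) ∂μ) l (𝓝 (∫ ω, X ω ∂μ)) := by
  refine tendsto_integral_filter_of_dominated_convergence (fun ω => C * (X ω + 1))
    (.of_forall fun i => ((hGmeas i).comp_aemeasurable hX.aemeasurable).aestronglyMeasurable)
    ?_ ((hX.add (integrable_const 1)).const_mul C) (hXnn.mono fun ω hω => hlim _ hω)
  filter_upwards [hbound] with i hi
  filter_upwards [hXnn] with ω hω
  rw [Real.norm_of_nonneg (hGnn _ _)]
  exact hi _ hω

theorem ProbabilityTheory.IndepFun.toReal_measure_le_comp_eq_integral_cdf {Ω : Type*}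
    [MeasurableSpace Ω] {P : Measure Ω} [IsProbabilityMeasure P] {X Y : Ω → ℝ}
    (hX : Measurable X) (hY : Measurable Y)
    (hXY : IndepFun X Y P) {f : ℝ → ℝ} (hf : Measurable f) :
    (P {ω | Y ω ≤ f (X ω)}).toReal = ∫ ω, cdf (P.map Y) (f (X ω)) ∂P := by
  have : IsProbabilityMeasure (P.map Y) := Measure.isProbabilityMeasure_map hY.aemeasurable
  have hS : MeasurableSet {p : ℝ × ℝ | p.2 ≤ f p.1} :=
    measurableSet_le measurable_snd (hf.comp measurable_fst)
  have hcdf : Measurable fun x => cdf (P.map Y) (f x) := (monotone_cdf _).measurable.comp hf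
  have hprod : P {ω | Y ω ≤ f (X ω)} = ∫⁻ x, ENNReal.ofReal (cdf (P.map Y) (f x)) ∂(P.map X) := by
    change P ((fun ω => (X ω, Y ω)) ⁻¹' {p | p.2 ≤ f p.1}) = _
    rw [← Measure.map_apply (hX.prodMk hY) hS,
      (indepFun_iff_map_prod_eq_prod_map_map hX.aemeasurable hY.aemeasurable).1 hXY,
      Measure.prod_apply hS]
    simp only [ofReal_cdf]
    rfl
  rw [hprod, ← integral_toReal hcdf.ennreal_ofReal.aemeasurable (.of_forall fun _ => by simp),
    ← integral_map hX.aemeasurable hcdf.aestronglyMeasurable]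
  simp only [ENNReal.toReal_ofReal (cdf_nonneg _ _)]

theorem stmt10_general {Ω : Type*} [MeasurableSpace Ω] (P : Measure Ω) [IsProbabilityMeasure P]
    (X Y : Ω → ℝ) (hXmeas : Measurable X) (hYmeas : Measurable Y)
    (hXnn : ∀ᵐ ω ∂P, 0 ≤ X ω)
    (hXint : Integrable X P)
    (hindep : IndepFun X Y P)
    (L : ℝ → ℝ) (hLpos : ∀ t : ℝ, 0 < t → 0 < L t)
    (hLslow : ∀ x : ℝ, 0 < x →
      Tendsto (fun t : ℝ => L (t * x) / L t) (nhdsWithin 0 (Set.Ioi 0)) (nhds 1))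
    (hLmono : ∃ δ : ℝ, 0 < δ ∧ AntitoneOn L (Set.Ioo 0 δ))
    (htail : Tendsto (fun t : ℝ => (P {ω | Y ω ≤ t}).toReal / (t * L t))
      (nhdsWithin 0 (Set.Ioi 0)) (nhds 1)) :
    Tendsto
      (fun t : ℝ => (P {ω | Y ω ≤ t * X ω}).toReal / (P {ω | Y ω ≤ t}).toReal)
      (nhdsWithin 0 (Set.Ioi 0)) (nhds (∫ ω, X ω ∂P)) := by
  have : IsProbabilityMeasure (P.map Y) := Measure.isProbabilityMeasure_map hYmeas.aemeasurable
  set F := cdf (P.map Y)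
  have hF : ∀ s, (P {ω | Y ω ≤ s}).toReal = F s := fun s => by
    rw [cdf_eq_real, measureReal_def, Measure.map_apply hYmeas measurableSet_Iic]
    rfl
  simp only [hF] at htail ⊢
  have hratio := SlowlyVaryingAtZero.tendsto_div_of_tendsto_div_mul hLslow hLpos htail
  have hF0 : F 0 = 0 := eq_zero_of_tendsto_div (monotone_cdf _) (cdf_le_one _) (cdf_nonneg _ 0)
    hratio
  have hlim : ∀ x, 0 ≤ x → Tendsto (fun t => F (t * x) / F t) (𝓝[>] 0) (𝓝 x) := by
    intro x hx
    rcases hx.eq_or_lt with rfl | hx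
    · simp [hF0]
    · exact hratio x hx
  obtain ⟨C, hC⟩ :=
    exists_eventually_div_le_mul_add_one (monotone_cdf _) (cdf_le_one _) hLpos hLmono htail
  refine (tendsto_integral_comp_of_le_mul_add_one
    (fun t => ((monotone_cdf _).measurable.comp (measurable_const_mul t)).div_const _)
    (fun _ _ => div_nonneg (cdf_nonneg _ _) (cdf_nonneg _ _)) hXint hXnn hlim hC).congr' ?_
  filter_upwards with t
  rw [hindep.toReal_measure_le_comp_eq_integral_cdf hXmeas hYmeas (measurable_const_mul t),
    ← integral_div]
  rfl

/-- If `X, Y ≥ 0` are independent with `E[X] < ∞` and `P(Y ≤ t) ~ t L(t)` as `t ↓ 0`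
for a positive slowly varying (at 0) function `L` non-increasing near `0`, then
`P(Y ≤ tX)/P(Y ≤ t) → E[X]` as `t ↓ 0`. -/
theorem stmt10 {Ω : Type*} [MeasurableSpace Ω] (P : Measure Ω) [IsProbabilityMeasure P]
    (X Y : Ω → ℝ) (hXmeas : Measurable X) (hYmeas : Measurable Y)
    (hXnn : ∀ᵐ ω ∂P, 0 ≤ X ω) (hYnn : ∀ᵐ ω ∂P, 0 ≤ Y ω)
    (hXint : Integrable X P)
    (hindep : IndepFun X Y P)
    (L : ℝ → ℝ) (hLpos : ∀ t : ℝ, 0 < t → 0 < L t)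
    (hLslow : ∀ x : ℝ, 0 < x →
      Tendsto (fun t : ℝ => L (t * x) / L t) (nhdsWithin 0 (Set.Ioi 0)) (nhds 1))
    (hLmono : ∃ δ : ℝ, 0 < δ ∧ AntitoneOn L (Set.Ioo 0 δ))
    (htail : Tendsto (fun t : ℝ => (P {ω | Y ω ≤ t}).toReal / (t * L t))
      (nhdsWithin 0 (Set.Ioi 0)) (nhds 1)) :
    Tendsto
      (fun t : ℝ => (P {ω | Y ω ≤ t * X ω}).toReal / (P {ω | Y ω ≤ t}).toReal)
      (nhdsWithin 0 (Set.Ioi 0)) (nhds (∫ ω, X ω ∂P)) :=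
  stmt10_general P X Y hXmeas hYmeas hXnn hXint hindep L hLpos hLslow hLmono htail
end

section
/- Let E_1, ..., E_q be i.i.d. standard exponential random variables, 1 ≤ p < q, and suppose P(E_1 ≤ x) ~ x as x ↓ 0 (which holds with c = α = 1). Then there exists a constant C > 0 such that for all 0 < 2y < x < 1/2: P(E_1 ⋯ E_p ≤ x, E_1 ⋯ E_q ≤ y) ≤ C · y · (ln(1/y))^{p-1} · (ln(x/y))^{q-p}. -/
/-!
If `U` and `V` are independent and `U V ≤ t ≤ U`, then `U` lies in a dyadic shell
`t 2ᵏ ≤ U < t 2ᵏ⁺¹` and `V ≤ 2⁻ᵏ`; summing over shells bounds `P(U V ≤ t)` by products of the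
marginal tails. Inducting on the number of factors, using only `P(E ≤ c) ≤ c`, this gives
`P(E₁⋯Eₙ ≤ t) ≤ 4ⁿ t (1 + log(1/t))ⁿ⁻¹`. For the joint event, `E₁⋯E_p ≤ x` leaves only the
`≈ log₂(x/y)` shells between `y` and `x`, each contributing
`≲ y (log(1/y))ᵖ⁻¹ (log(x/y))^(q-p-1)`.
-/

open MeasureTheory ProbabilityTheory Real Finset

lemma exists_dyadic_scale {u v t : ℝ} {K : ℕ} (ht : 0 < t) (htu : t ≤ u) (hu : u < t * 2 ^ K)
    (huv : u * v ≤ t) : ∃ k < K, u ≤ t * 2 ^ (k + 1) ∧ v ≤ (2 ^ k)⁻¹ := by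
  obtain ⟨k, hk, hk'⟩ := exists_nat_pow_near ((one_le_div ht).2 htu) one_lt_two
  have hu0 : 0 < u := ht.trans_le htu
  refine ⟨k, ?_, ?_, ?_⟩
  · have : (2 : ℝ) ^ k < 2 ^ K := hk.trans_lt ((div_lt_iff₀' ht).2 hu)
    exact (pow_lt_pow_iff_right₀ one_lt_two).1 this
  · exact ((div_lt_iff₀' ht).1 hk').le
  · rw [le_div_iff₀ ht] at hk
    calc v ≤ t / u := (le_div_iff₀' hu0).2 huv
    _ ≤ t / (2 ^ k * t) := by gcongr
    _ = (2 ^ k)⁻¹ := by field_simp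

lemma natCast_le_two_mul_log_of_two_pow_le {m : ℕ} {r : ℝ} (h : 2 ^ m ≤ r) :
    (m : ℝ) ≤ 2 * log r := by
  have hlog2 : 1 / 2 < log 2 := lt_trans (by norm_num) log_two_gt_d9
  have hm := log_le_log (by positivity) h
  rw [log_pow] at hm
  nlinarith [Nat.cast_nonneg (α := ℝ) m]

lemma one_add_log_le_three_mul_log {r : ℝ} (hr : 2 ≤ r) : 1 + log r ≤ 3 * log r := by
  linarith [log_le_log two_pos hr, log_two_gt_d9]

lemma lt_mul_two_pow_of_mul_le {u v t : ℝ} {K : ℕ} (ht : 0 < t) (huv : u * v ≤ t)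
    (hv : (2 ^ K)⁻¹ < v) : u < t * 2 ^ K := by
  have hv0 : 0 < v := lt_trans (by positivity) hv
  calc u ≤ t / v := (le_div_iff₀ hv0).2 huv
  _ < t / (2 ^ K)⁻¹ := by gcongr
  _ = t * 2 ^ K := div_inv_eq_mul _ _

section

variable {Ω : Type*} [MeasurableSpace Ω] {P : Measure Ω}

lemma ProbabilityTheory.IndepFun.measureReal_le_inter_le_eq_mul {U V : Ω → ℝ}
    (hUV : IndepFun U V P) (a b : ℝ) :
    P.real ({ω | U ω ≤ a} ∩ {ω | V ω ≤ b}) = P.real {ω | U ω ≤ a} * P.real {ω | V ω ≤ b} := by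
  simp only [Measure.real, ← ENNReal.toReal_mul]
  exact congrArg ENNReal.toReal
    (hUV.measure_inter_preimage_eq_mul _ _ measurableSet_Iic measurableSet_Iic)

lemma ProbabilityTheory.IndepFun.measureReal_mul_le_le_add_sum [IsFiniteMeasure P] {U V : Ω → ℝ}
    (hUV : IndepFun U V P) {t : ℝ} (ht : 0 < t) (K : ℕ) :
    P.real {ω | U ω * V ω ≤ t ∧ U ω < t * 2 ^ K} ≤ P.real {ω | U ω ≤ t} +
      ∑ k ∈ range K, P.real {ω | U ω ≤ t * 2 ^ (k + 1)} * P.real {ω | V ω ≤ (2 ^ k)⁻¹} := by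
  have hcover : {ω | U ω * V ω ≤ t ∧ U ω < t * 2 ^ K} ⊆ {ω | U ω ≤ t} ∪
      ⋃ k ∈ range K, {ω | U ω ≤ t * 2 ^ (k + 1)} ∩ {ω | V ω ≤ (2 ^ k)⁻¹} := by
    rintro ω ⟨huv, hu⟩
    rcases le_or_gt (U ω) t with hut | htu
    · exact Or.inl hut
    obtain ⟨k, hk, hUk, hVk⟩ := exists_dyadic_scale ht htu.le hu huv
    exact Or.inr (Set.mem_biUnion (mem_range.2 hk) ⟨hUk, hVk⟩)
  calc _ ≤ _ := measureReal_mono hcover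
  _ ≤ P.real {ω | U ω ≤ t} +
      ∑ k ∈ range K, P.real ({ω | U ω ≤ t * 2 ^ (k + 1)} ∩ {ω | V ω ≤ (2 ^ k)⁻¹}) :=
    (measureReal_union_le _ _).trans (add_le_add_right (measureReal_biUnion_finset_le _ _) _)
  _ = _ := by simp only [hUV.measureReal_le_inter_le_eq_mul]

lemma measureReal_le_of_cdf_eq_exp {X : Ω → ℝ}
    (hX : ∀ x : ℝ, 0 ≤ x → P {ω | X ω ≤ x} = ENNReal.ofReal (1 - exp (-x))) {c : ℝ}
    (hc : 0 ≤ c) : P.real {ω | X ω ≤ c} ≤ c := by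
  rw [measureReal_def, hX c hc,
    ENNReal.toReal_ofReal (sub_nonneg.2 (exp_le_one_iff.2 (neg_nonpos.2 hc)))]
  linarith [add_one_le_exp (-c)]

lemma ProbabilityTheory.iIndepFun.indepFun_finsetProd_of_disjoint {ι β : Type*}
    [MeasurableSpace β] [CommMonoid β] [MeasurableMul₂ β] {X : ι → Ω → β}
    (hindep : iIndepFun X P) (hmeas : ∀ i, Measurable (X i)) {S T : Finset ι}
    (hST : Disjoint S T) : IndepFun (∏ i ∈ S, X i) (∏ i ∈ T, X i) P := by
  have hprod (R : Finset ι) : Measurable (fun g : R → β => ∏ i, g i) :=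
    Finset.measurable_prod _ fun i _ => measurable_pi_apply i
  convert (hindep.indepFun_finset S T hST hmeas).comp (hprod S) (hprod T) using 1 <;>
    ext ω <;> simp only [Finset.prod_apply, Function.comp_apply] <;> exact (prod_attach _ _).symm

/-- `U` has, up to the constant `4 ^ (n + 1)`, the lower tail of a product of `n + 1`
independent variables with `P(X ≤ c) ≤ c`. -/
def HasLogTail (P : Measure Ω) (U : Ω → ℝ) (n : ℕ) : Prop :=
  ∀ t, 0 < t → t ≤ 1 → P.real {ω | U ω ≤ t} ≤ 4 ^ (n + 1) * t * (1 + log t⁻¹) ^ n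

lemma HasLogTail.le_of_le {U : Ω → ℝ} {n : ℕ} (hU : HasLogTail P U n) {t s : ℝ} (ht : 0 < t)
    (hts : t ≤ s) (hs : s ≤ 1) :
    P.real {ω | U ω ≤ s} ≤ 4 ^ (n + 1) * s * (1 + log t⁻¹) ^ n := by
  have hs0 : 0 < s := ht.trans_le hts
  have : 0 ≤ log s⁻¹ := log_nonneg (one_le_inv₀ hs0 |>.2 hs)
  exact (hU s hs0 hs).trans (by gcongr)

lemma HasLogTail.measureReal_le_inv_two_pow {V : Ω → ℝ} {b k : ℕ} (hV : HasLogTail P V b)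
    {r : ℝ} (hr : 2 ^ k ≤ r) :
    P.real {ω | V ω ≤ (2 ^ k)⁻¹} ≤ 4 ^ (b + 1) * (2 ^ k)⁻¹ * (1 + log r) ^ b := by
  refine (hV _ (by positivity) (inv_le_one_of_one_le₀ (one_le_pow₀ one_le_two))).trans ?_
  have : 0 ≤ log ((2 : ℝ) ^ k) := log_nonneg (one_le_pow₀ one_le_two)
  rw [inv_inv]
  gcongr

lemma HasLogTail.measureReal_mul_le_le [IsFiniteMeasure P] {U V : Ω → ℝ} {n K : ℕ}
    (hUV : IndepFun U V P) (hU : HasLogTail P U n) (hV : ∀ c, 0 ≤ c → P.real {ω | V ω ≤ c} ≤ c)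
    {t : ℝ} (ht : 0 < t) (hK : 2 ^ K ≤ t⁻¹) (hK' : t⁻¹ < 2 ^ (K + 1)) :
    P.real {ω | U ω * V ω ≤ t} ≤ 2 * t + (2 * K + 1) * (4 ^ (n + 1) * t * (1 + log t⁻¹) ^ n) := by
  set M := 4 ^ (n + 1) * t * (1 + log t⁻¹) ^ n with hM_def
  have hinv : 1 ≤ t⁻¹ := (one_le_pow₀ one_le_two).trans hK
  have hlog : 0 ≤ log t⁻¹ := log_nonneg hinv
  have hcover : {ω | U ω * V ω ≤ t} ⊆
      {ω | V ω ≤ (2 ^ K)⁻¹} ∪ {ω | U ω * V ω ≤ t ∧ U ω < t * 2 ^ K} := by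
    intro ω (h : U ω * V ω ≤ t)
    rcases le_or_gt (V ω) (2 ^ K)⁻¹ with hVK | hVK
    · exact Or.inl hVK
    · exact Or.inr ⟨h, lt_mul_two_pow_of_mul_le ht h hVK⟩
  have hsmall : (2 ^ K)⁻¹ ≤ 2 * t := by
    rw [inv_le_comm₀ (by positivity) (by positivity), mul_inv]
    rw [pow_succ] at hK'
    linarith
  have hterm : ∀ k ∈ range K,
      P.real {ω | U ω ≤ t * 2 ^ (k + 1)} * P.real {ω | V ω ≤ (2 ^ k)⁻¹} ≤ 2 * M := by
    intro k hk
    have hk1 : t * 2 ^ (k + 1) ≤ 1 := by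
      calc t * 2 ^ (k + 1) ≤ t * 2 ^ K := by gcongr; exacts [one_le_two, mem_range.1 hk]
      _ ≤ t * t⁻¹ := by gcongr
      _ = 1 := mul_inv_cancel₀ ht.ne'
    calc _ ≤ (4 ^ (n + 1) * (t * 2 ^ (k + 1)) * (1 + log t⁻¹) ^ n) * (2 ^ k)⁻¹ :=
          mul_le_mul (hU.le_of_le ht (le_mul_of_one_le_right ht.le (one_le_pow₀ one_le_two)) hk1)
            (hV _ (by positivity)) measureReal_nonneg (by positivity)
    _ = 2 * M := by rw [hM_def]; field_simp; ring
  calc P.real {ω | U ω * V ω ≤ t}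
      ≤ P.real {ω | V ω ≤ (2 ^ K)⁻¹} + P.real {ω | U ω * V ω ≤ t ∧ U ω < t * 2 ^ K} :=
        (measureReal_mono hcover).trans (measureReal_union_le _ _)
  _ ≤ 2 * t + (M + K * (2 * M)) := by
      gcongr
      · exact (hV _ (by positivity)).trans hsmall
      · refine (hUV.measureReal_mul_le_le_add_sum ht K).trans
          (add_le_add (hU t ht ((one_le_inv₀ ht).1 hinv)) ?_)
        simpa using sum_le_card_nsmul _ _ _ hterm
  _ = 2 * t + (2 * K + 1) * M := by ring

lemma HasLogTail.mul [IsFiniteMeasure P] {U V : Ω → ℝ} {n : ℕ} (hUV : IndepFun U V P)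
    (hU : HasLogTail P U n) (hV : ∀ c, 0 ≤ c → P.real {ω | V ω ≤ c} ≤ c) :
    HasLogTail P (U * V) (n + 1) := by
  intro t ht ht1
  obtain ⟨K, hK, hK'⟩ := exists_nat_pow_near ((one_le_inv₀ ht).2 ht1) one_lt_two
  set L := 1 + log t⁻¹ with hL_def
  set M := 4 ^ (n + 1) * t * L ^ n with hM_def
  have hL : 1 ≤ L := le_add_of_nonneg_right (log_nonneg ((one_le_inv₀ ht).2 ht1))
  have htM : t ≤ M := by
    have : (1 : ℝ) ≤ 4 ^ (n + 1) * L ^ n :=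
      one_le_mul_of_one_le_of_one_le (one_le_pow₀ (by norm_num)) (one_le_pow₀ hL)
    rw [hM_def]; nlinarith
  have hK_log : (K : ℝ) ≤ 2 * (L - 1) := by
    rw [hL_def, add_sub_cancel_left]; exact natCast_le_two_mul_log_of_two_pow_le hK
  calc P.real {ω | (U * V) ω ≤ t} ≤ 2 * t + (2 * K + 1) * M :=
        hU.measureReal_mul_le_le hUV hV ht hK hK'
  _ ≤ 4 * L * M := by nlinarith [mul_le_mul_of_nonneg_right hK_log (ht.le.trans htM)]
  _ = 4 ^ (n + 1 + 1) * t * L ^ (n + 1) := by rw [hM_def]; ring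

theorem ProbabilityTheory.iIndepFun.hasLogTail_prod [IsFiniteMeasure P] {ι : Type*}
    {X : ι → Ω → ℝ} (hindep : iIndepFun X P) (hmeas : ∀ i, Measurable (X i))
    (hX : ∀ i c, 0 ≤ c → P.real {ω | X i ω ≤ c} ≤ c) {s : Finset ι} (hs : s.Nonempty) :
    HasLogTail P (∏ i ∈ s, X i) (#s - 1) := by
  classical
  induction hs using Finset.Nonempty.cons_induction with
  | singleton i =>
    intro t ht _
    simpa using (hX i t ht.le).trans (le_mul_of_one_le_left ht.le (by norm_num))
  | cons i s hi hs ih =>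
    rw [prod_cons, card_cons, Nat.add_sub_cancel, mul_comm, ← Nat.sub_add_cancel hs.card_pos]
    exact ih.mul (hindep.indepFun_finsetProd_of_notMem hmeas hi) (hX i)

lemma HasLogTail.measureReal_le_and_mul_le_of_two_pow_le [IsFiniteMeasure P] {U V : Ω → ℝ}
    {a b m : ℕ} (hUV : IndepFun U V P) (hU : HasLogTail P U a) (hV : HasLogTail P V b)
    {x y : ℝ} (hy : 0 < y) (hx : x ≤ 1 / 2) (hm : 2 ^ m ≤ x / y) (hm' : x / y < 2 ^ (m + 1)) :
    P.real {ω | U ω ≤ x ∧ U ω * V ω ≤ y} ≤ 4 ^ (a + 1) * y * (1 + log y⁻¹) ^ a +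
      (m + 1) * (2 * 4 ^ (a + b + 2) * (y * (1 + log y⁻¹) ^ a * (1 + log (x / y)) ^ b)) := by
  have hyx : y ≤ x := by rw [← one_le_div hy]; exact (one_le_pow₀ one_le_two).trans hm
  have hlog : 0 ≤ log y⁻¹ := log_nonneg ((one_le_inv₀ hy).2 (by linarith))
  have hsub : {ω | U ω ≤ x ∧ U ω * V ω ≤ y} ⊆ {ω | U ω * V ω ≤ y ∧ U ω < y * 2 ^ (m + 1)} :=
    fun ω ⟨hUx, hUV⟩ => ⟨hUV, hUx.trans_lt ((div_lt_iff₀' hy).1 hm')⟩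
  have hterm : ∀ k ∈ range (m + 1),
      P.real {ω | U ω ≤ y * 2 ^ (k + 1)} * P.real {ω | V ω ≤ (2 ^ k)⁻¹} ≤
        2 * 4 ^ (a + b + 2) * (y * (1 + log y⁻¹) ^ a * (1 + log (x / y)) ^ b) := by
    intro k hk
    have hkm : k ≤ m := Nat.lt_succ_iff.1 (mem_range.1 hk)
    have hk1 : y * 2 ^ (k + 1) ≤ 1 := by
      calc y * 2 ^ (k + 1) ≤ y * 2 ^ (m + 1) := by gcongr; exact one_le_two
      _ = 2 * (2 ^ m * y) := by ring
      _ ≤ 2 * x := by gcongr; exact (le_div_iff₀ hy).1 hm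
      _ ≤ 1 := by linarith
    calc _ ≤ (4 ^ (a + 1) * (y * 2 ^ (k + 1)) * (1 + log y⁻¹) ^ a) *
          (4 ^ (b + 1) * (2 ^ k)⁻¹ * (1 + log (x / y)) ^ b) :=
          mul_le_mul (hU.le_of_le hy (le_mul_of_one_le_right hy.le (one_le_pow₀ one_le_two)) hk1)
            (hV.measureReal_le_inv_two_pow ((pow_le_pow_right₀ one_le_two hkm).trans hm))
            measureReal_nonneg (by positivity)
    _ = _ := by field_simp; ring
  calc P.real {ω | U ω ≤ x ∧ U ω * V ω ≤ y}
      ≤ P.real {ω | U ω * V ω ≤ y ∧ U ω < y * 2 ^ (m + 1)} := measureReal_mono hsub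
  _ ≤ _ := by
      refine (hUV.measureReal_mul_le_le_add_sum hy (m + 1)).trans
        (add_le_add (hU y hy (by linarith)) ?_)
      simpa using sum_le_card_nsmul _ _ _ hterm

lemma HasLogTail.measureReal_le_and_mul_le [IsFiniteMeasure P] {U V : Ω → ℝ} {a b : ℕ}
    (hUV : IndepFun U V P) (hU : HasLogTail P U a) (hV : HasLogTail P V b) {x y : ℝ}
    (hy : 0 < y) (hyx : y ≤ x) (hx : x ≤ 1 / 2) :
    P.real {ω | U ω ≤ x ∧ U ω * V ω ≤ y} ≤
      4 ^ (a + b + 4) * y * (1 + log y⁻¹) ^ a * (1 + log (x / y)) ^ (b + 1) := by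
  obtain ⟨m, hm, hm'⟩ := exists_nat_pow_near ((one_le_div hy).2 hyx) one_lt_two
  set L := 1 + log y⁻¹ with hL_def
  set Λ := 1 + log (x / y) with hΛ_def
  set B := y * L ^ a * Λ ^ b with hB_def
  have hL : 0 ≤ L := add_nonneg zero_le_one (log_nonneg ((one_le_inv₀ hy).2 (by linarith)))
  have hΛ : 1 ≤ Λ := le_add_of_nonneg_right (log_nonneg ((one_le_div hy).2 hyx))
  have hm_log : (m : ℝ) + 1 ≤ 2 * Λ := by
    linarith [natCast_le_two_mul_log_of_two_pow_le hm]
  have hfirst : 4 ^ (a + 1) * y * L ^ a ≤ 4 ^ (a + b + 2) * B * Λ := by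
    have h4 : (4 : ℝ) ^ (a + 1) ≤ 4 ^ (a + b + 2) := pow_le_pow_right₀ (by norm_num) (by omega)
    have hΛb : 1 ≤ Λ ^ b * Λ := one_le_mul_of_one_le_of_one_le (one_le_pow₀ hΛ) hΛ
    calc 4 ^ (a + 1) * y * L ^ a = 4 ^ (a + 1) * (y * L ^ a) * 1 := by ring
    _ ≤ 4 ^ (a + b + 2) * (y * L ^ a) * (Λ ^ b * Λ) := by gcongr
    _ = _ := by ring
  calc P.real {ω | U ω ≤ x ∧ U ω * V ω ≤ y}
      ≤ 4 ^ (a + 1) * y * L ^ a + (m + 1) * (2 * 4 ^ (a + b + 2) * B) :=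
        hU.measureReal_le_and_mul_le_of_two_pow_le hUV hV hy hx hm hm'
  _ ≤ 4 ^ (a + b + 2) * B * Λ + (2 * Λ) * (2 * 4 ^ (a + b + 2) * B) := by gcongr
  _ = 5 * 4 ^ (a + b + 2) * (B * Λ) := by ring
  _ ≤ 4 ^ 2 * 4 ^ (a + b + 2) * (B * Λ) := by gcongr; norm_num
  _ = 4 ^ (a + b + 4) * y * L ^ a * Λ ^ (b + 1) := by rw [hB_def]; ring

end

/-- Joint lower-tail bound for products of i.i.d. standard exponentials sharing the first
`p` factors: there is `C > 0` such that for all `0 < 2y < x < 1/2`,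
`P(E_1⋯E_p ≤ x, E_1⋯E_q ≤ y) ≤ C y (ln(1/y))^{p-1} (ln(x/y))^{q-p}`. -/
theorem stmt11 {Ω : Type*} [MeasurableSpace Ω] (P : Measure Ω) [IsProbabilityMeasure P]
    (p q : ℕ) (hp : 1 ≤ p) (hpq : p < q)
    (Eseq : ℕ → Ω → ℝ) (hmeas : ∀ i, Measurable (Eseq i))
    (hindep : iIndepFun Eseq P)
    (hexp : ∀ i, ∀ x : ℝ, 0 ≤ x →
      P {ω | Eseq i ω ≤ x} = ENNReal.ofReal (1 - Real.exp (-x))) :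
    ∃ C : ℝ, 0 < C ∧ ∀ x y : ℝ, 0 < y → 2 * y < x → x < 1 / 2 →
      (P {ω | (∏ i ∈ Finset.range p, Eseq i ω) ≤ x ∧
          (∏ i ∈ Finset.range q, Eseq i ω) ≤ y}).toReal ≤
        C * y * Real.log (1 / y) ^ (p - 1) * Real.log (x / y) ^ (q - p) := by
  have hX (i : ℕ) (c : ℝ) (hc : 0 ≤ c) : P.real {ω | Eseq i ω ≤ c} ≤ c :=
    measureReal_le_of_cdf_eq_exp (hexp i) hc
  have hU := hindep.hasLogTail_prod hmeas hX (nonempty_range_iff.2 (by omega : p ≠ 0))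
  have hV := hindep.hasLogTail_prod hmeas hX (nonempty_Ico.2 hpq)
  have hUV := hindep.indepFun_finsetProd_of_disjoint hmeas
    (range_eq_Ico p ▸ Ico_disjoint_Ico_consecutive 0 p q)
  rw [card_range] at hU
  rw [Nat.card_Ico] at hV
  refine ⟨4 ^ (q + 2) * 3 ^ (q - 1), by positivity, fun x y hy hyx hx => ?_⟩
  have key := hU.measureReal_le_and_mul_le hUV hV hy (by linarith) (by linarith)
  rw [Nat.sub_add_cancel (by omega : 1 ≤ q - p), show p - 1 + (q - p - 1) + 4 = q + 2 by omega]
    at key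
  simp only [prod_apply, prod_range_mul_prod_Ico _ hpq.le] at key
  have h1 : 2 ≤ 1 / y := by rw [le_div_iff₀ hy]; linarith
  have h2 : 2 ≤ x / y := by rw [le_div_iff₀ hy]; linarith
  have hlog1 : 0 ≤ log (1 / y) := log_nonneg (by linarith)
  have hlog2 : 0 ≤ log (x / y) := log_nonneg (by linarith)
  calc (P _).toReal
      ≤ 4 ^ (q + 2) * y * (1 + log (1 / y)) ^ (p - 1) * (1 + log (x / y)) ^ (q - p) := by
        rwa [one_div]
  _ ≤ 4 ^ (q + 2) * y * (3 * log (1 / y)) ^ (p - 1) * (3 * log (x / y)) ^ (q - p) := by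
      gcongr
      exacts [one_add_log_le_three_mul_log h1, one_add_log_le_three_mul_log h2]
  _ = 4 ^ (q + 2) * 3 ^ (q - 1) * y * log (1 / y) ^ (p - 1) * log (x / y) ^ (q - p) := by
      rw [mul_pow, mul_pow, show q - 1 = (p - 1) + (q - p) by omega, pow_add]; ring
end

section
/- Let α > 0, k ∈ ℤ₊, let (Γ_j)_{j≥1} be the arrival times of a unit-rate Poisson process, and let (T_j)_{j≥1} be i.i.d. random elements of a probability space (E, 𝓔, m), independent of (Γ_j). Let f : E^k → [0,∞] be measurable and vanish when any two coordinates are equal. Then the event { ⋁_{j ∈ 𝓓_k} f(T_{j_1},...,T_{j_k}) (Γ_{j_1} ⋯ Γ_{j_k})^{-1/α} < ∞ } has probability 0 or 1, where 𝓓_k is the set of k-tuples of distinct positive integers. -/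
/-!
Encode the data as the sequence of pairs `x l = (E_l, T_l)`: these are i.i.d., so their joint law
is a product measure `ν^ℕ`. Permuting finitely many pairs changes every arrival time `Γ_j` by a
factor bounded away from `0` and `∞`, so the supremum stays finite or infinite: the event is
a.s. invariant under the swap of the blocks `[0, n)` and `[n, 2n)`, for every `n`.
Hewitt–Savage then concludes: approximate the event `S` by a cylinder `A` over the coordinates
`< n`; `A` and its block-swapped image are independent, so
`μ S = μ (S ∩ σ⁻¹ S) ≈ μ (A ∩ σ⁻¹ A) = μ A ^ 2 ≈ μ S ^ 2`.
-/

open MeasureTheory Filter ProbabilityTheory Set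
open scoped ENNReal symmDiff

namespace ProbabilityTheory

variable {ι Ω β γ : Type*} [MeasurableSpace Ω] [MeasurableSpace β] [MeasurableSpace γ]
  {P : Measure Ω} {X : ι → Ω → β} {Y : ι → Ω → γ}

lemma map_prodMk_eq_prod_of_indepFun [IsFiniteMeasure P] (hXm : ∀ i, Measurable (X i))
    (hYm : ∀ i, Measurable (Y i))
    (hXY : IndepFun (fun ω i => X i ω) (fun ω i => Y i ω) P) (i : ι) :
    P.map (fun ω => (X i ω, Y i ω)) = (P.map (X i)).prod (P.map (Y i)) :=
  (indepFun_iff_map_prod_eq_prod_map_map (hXm i).aemeasurable (hYm i).aemeasurable).mp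
    (hXY.comp (measurable_pi_apply i) (measurable_pi_apply i))

lemma iIndepFun.prodMk_of_indepFun (hXm : ∀ i, Measurable (X i)) (hYm : ∀ i, Measurable (Y i))
    (hX : iIndepFun X P) (hY : iIndepFun Y P)
    (hXY : IndepFun (fun ω i => X i ω) (fun ω i => Y i ω) P) :
    iIndepFun (fun i ω => (X i ω, Y i ω)) P := by
  have := hX.isProbabilityMeasure
  have _ i := Measure.isProbabilityMeasure_map (hXm i).aemeasurable (μ := P)
  have _ i := Measure.isProbabilityMeasure_map (hYm i).aemeasurable (μ := P)
  rw [iIndepFun_iff_finset]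
  intro s
  refine (iIndepFun_iff_map_fun_eq_pi_map (f := fun (i : s) ω => (X i ω, Y i ω))
    fun i => ((hXm i).prodMk (hYm i)).aemeasurable).mpr ?_
  have hXs : P.map (fun ω (i : s) => X i ω) = Measure.pi fun i : s => P.map (X i) :=
    (iIndepFun_iff_finset.mp hX s).map_fun_eq_pi_map fun i => (hXm i).aemeasurable
  have hYs : P.map (fun ω (i : s) => Y i ω) = Measure.pi fun i : s => P.map (Y i) :=
    (iIndepFun_iff_finset.mp hY s).map_fun_eq_pi_map fun i => (hYm i).aemeasurable
  have hXYs : P.map (fun ω => ((fun (i : s) => X i ω), (fun (i : s) => Y i ω))) =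
      (P.map fun ω (i : s) => X i ω).prod (P.map fun ω (i : s) => Y i ω) :=
    (indepFun_iff_map_prod_eq_prod_map_map (by fun_prop) (by fun_prop)).mp
      (hXY.comp (φ := Finset.restrict s) (ψ := Finset.restrict s) (by fun_prop) (by fun_prop))
  simp_rw [map_prodMk_eq_prod_of_indepFun hXm hYm hXY]
  rw [← ((measurePreserving_arrowProdEquivProdArrow β γ s _ _).symm _).map_eq, ← hXs, ← hYs,
    ← hXYs, Measure.map_map (by fun_prop) (by fun_prop)]
  rfl

lemma map_prodMk_eq_infinitePi (hXm : ∀ i, Measurable (X i)) (hYm : ∀ i, Measurable (Y i))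
    (hX : iIndepFun X P) (hY : iIndepFun Y P)
    (hXY : IndepFun (fun ω i => X i ω) (fun ω i => Y i ω) P) {μ : Measure β} {ν : Measure γ}
    [IsProbabilityMeasure μ] [IsProbabilityMeasure ν]
    (hXlaw : ∀ i, P.map (X i) = μ) (hYlaw : ∀ i, P.map (Y i) = ν) :
    P.map (fun ω i => (X i ω, Y i ω)) = Measure.infinitePi fun _ => μ.prod ν := by
  have := hX.isProbabilityMeasure
  rw [(hX.prodMk_of_indepFun hXm hYm hY hXY).map_fun_eq_infinitePi_map
    fun i => (hXm i).prodMk (hYm i)]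
  simp_rw [map_prodMk_eq_prod_of_indepFun hXm hYm hXY, hXlaw, hYlaw]

end ProbabilityTheory

section Exponential

variable {Ω : Type*} [MeasurableSpace Ω] {P : Measure Ω}

lemma measure_le_eq_of_exponential_cdf {X : Ω → ℝ}
    (hX : ∀ x, 0 ≤ x → P {ω | X ω ≤ x} = ENNReal.ofReal (1 - Real.exp (-x))) (x : ℝ) :
    P {ω | X ω ≤ x} = ENNReal.ofReal (1 - Real.exp (-x)) := by
  rcases le_or_gt 0 x with hx | hx
  · exact hX x hx
  · have h0 : P {ω | X ω ≤ 0} = 0 := by simp [hX 0 le_rfl]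
    have hx0 : P {ω | X ω ≤ x} = 0 :=
      measure_mono_null (fun ω (hω : X ω ≤ x) => hω.trans hx.le) h0
    rw [hx0, eq_comm, ENNReal.ofReal_eq_zero, sub_nonpos]
    exact Real.one_le_exp (by linarith)

lemma map_eq_map_of_exponential_cdf [IsFiniteMeasure P] {X Y : Ω → ℝ} (hXm : Measurable X)
    (hYm : Measurable Y)
    (hX : ∀ x, 0 ≤ x → P {ω | X ω ≤ x} = ENNReal.ofReal (1 - Real.exp (-x)))
    (hY : ∀ x, 0 ≤ x → P {ω | Y ω ≤ x} = ENNReal.ofReal (1 - Real.exp (-x))) :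
    P.map X = P.map Y := by
  refine Measure.ext_of_Iic _ _ fun x => ?_
  rw [Measure.map_apply hXm measurableSet_Iic, Measure.map_apply hYm measurableSet_Iic]
  exact (measure_le_eq_of_exponential_cdf hX x).trans (measure_le_eq_of_exponential_cdf hY x).symm

end Exponential

section ZeroOne

variable {Ω : Type*} [MeasurableSpace Ω] {μ : Measure Ω} [IsProbabilityMeasure μ]

lemma abs_measureReal_inter_preimage_sub_le {Φ : Ω → Ω} (hΦ : MeasurePreserving Φ μ μ)
    {S A : Set Ω} (hS : MeasurableSet S) (hA : MeasurableSet A) :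
    |μ.real (S ∩ Φ ⁻¹' S) - μ.real (A ∩ Φ ⁻¹' A)| ≤ 2 * μ.real (S ∆ A) := by
  have hsub : (S ∩ Φ ⁻¹' S) ∆ (A ∩ Φ ⁻¹' A) ⊆ S ∆ A ∪ Φ ⁻¹' (S ∆ A) := by
    rw [preimage_symmDiff]
    intro x hx
    simp only [mem_symmDiff, mem_inter_iff, mem_preimage, mem_union] at hx ⊢
    tauto
  calc |μ.real (S ∩ Φ ⁻¹' S) - μ.real (A ∩ Φ ⁻¹' A)|
      ≤ μ.real ((S ∩ Φ ⁻¹' S) ∆ (A ∩ Φ ⁻¹' A)) :=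
        abs_measureReal_sub_le_measureReal_symmDiff
          (hS.inter (hΦ.measurable hS)).nullMeasurableSet
          (hA.inter (hΦ.measurable hA)).nullMeasurableSet
    _ ≤ μ.real (S ∆ A) + μ.real (Φ ⁻¹' (S ∆ A)) :=
        (measureReal_mono hsub).trans (measureReal_union_le _ _)
    _ = 2 * μ.real (S ∆ A) := by
        rw [hΦ.measureReal_preimage (hS.symmDiff hA).nullMeasurableSet]; ring

lemma abs_measureReal_sub_sq_le {Φ : Ω → Ω} (hΦ : MeasurePreserving Φ μ μ) {S A : Set Ω}
    (hS : MeasurableSet S) (hA : MeasurableSet A) (hinv : Φ ⁻¹' S =ᵐ[μ] S)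
    (hindep : μ (A ∩ Φ ⁻¹' A) = μ A * μ A) :
    |μ.real S - μ.real S ^ 2| ≤ 4 * μ.real (S ∆ A) := by
  have hSS : μ.real (S ∩ Φ ⁻¹' S) = μ.real S := by
    rw [measureReal_congr (EventuallyEq.rfl.inter hinv), inter_self]
  have hAA : μ.real (A ∩ Φ ⁻¹' A) = μ.real A ^ 2 := by
    rw [measureReal_def, hindep, ENNReal.toReal_mul, sq]; rfl
  have hint := abs_measureReal_inter_preimage_sub_le hΦ hS hA
  rw [hSS, hAA] at hint
  have hSA : |μ.real S - μ.real A| ≤ μ.real (S ∆ A) :=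
    abs_measureReal_sub_le_measureReal_symmDiff hS.nullMeasurableSet hA.nullMeasurableSet
  have hsq : |μ.real A ^ 2 - μ.real S ^ 2| ≤ 2 * μ.real (S ∆ A) := by
    rw [sq_sub_sq, abs_mul, abs_sub_comm, abs_of_nonneg (by positivity)]
    nlinarith [abs_nonneg (μ.real S - μ.real A), measureReal_le_one (μ := μ) (s := S),
      measureReal_le_one (μ := μ) (s := A)]
  calc |μ.real S - μ.real S ^ 2|
      ≤ |μ.real S - μ.real A ^ 2| + |μ.real A ^ 2 - μ.real S ^ 2| := abs_sub_le _ _ _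
    _ ≤ 4 * μ.real (S ∆ A) := by linarith

theorem measure_eq_zero_or_one_of_forall_approx {S : Set Ω} (hS : MeasurableSet S)
    (h : ∀ ε > 0, ∃ A Φ, MeasurableSet A ∧ μ.real (S ∆ A) ≤ ε ∧
      MeasurePreserving Φ μ μ ∧ Φ ⁻¹' S =ᵐ[μ] S ∧ μ (A ∩ Φ ⁻¹' A) = μ A * μ A) :
    μ S = 0 ∨ μ S = 1 := by
  have hfix : μ.real S * (1 - μ.real S) = 0 := by
    suffices |μ.real S - μ.real S ^ 2| ≤ 0 by linear_combination abs_nonpos_iff.mp this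
    refine le_of_forall_pos_le_add fun ε hε => ?_
    obtain ⟨A, Φ, hA, hSA, hΦ, hinv, hindep⟩ := h (ε / 4) (by positivity)
    linarith [abs_measureReal_sub_sq_le hΦ hS hA hinv hindep]
  rcases mul_eq_zero.mp hfix with h0 | h1
  · exact Or.inl ((measureReal_eq_zero_iff).mp h0)
  · rw [← ofReal_measureReal, show μ.real S = 1 by linarith, ENNReal.ofReal_one]
    exact Or.inr rfl

end ZeroOne

def blockSwap (n : ℕ) : Equiv.Perm ℕ :=
  Function.Involutive.toPerm (fun m => if m < n then m + n else if m < 2 * n then m - n else m)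
    (by intro m; dsimp only; split_ifs <;> omega)

lemma blockSwap_apply_of_lt {n m : ℕ} (h : m < n) : blockSwap n m = m + n := if_pos h

lemma blockSwap_apply_of_le {n m : ℕ} (h : 2 * n ≤ m) : blockSwap n m = m :=
  (if_neg (by omega)).trans (if_neg (by omega))

lemma disjoint_image_blockSwap {n : ℕ} {I : Finset ℕ} (hI : ∀ i ∈ I, i < n) :
    Disjoint I (I.image (blockSwap n)) := by
  refine Finset.disjoint_left.mpr fun i hi hi' => ?_
  obtain ⟨j, hj, hji⟩ := Finset.mem_image.mp hi'
  have := hI i hi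
  rw [blockSwap_apply_of_lt (hI j hj)] at hji
  omega

section InfinitePi

open Measure

variable {ι β : Type*} [MeasurableSpace β]

lemma measurePreserving_comp_perm (ν : Measure β) [IsProbabilityMeasure ν] (σ : Equiv.Perm ι) :
    MeasurePreserving (fun x : ι → β => x ∘ σ) (infinitePi fun _ => ν)
      (infinitePi fun _ => ν) :=
  ⟨by fun_prop, Measure.map_infinitePi_infinitePi_of_inj σ.injective⟩

lemma indepFun_restrict_restrict_comp [DecidableEq ι] (μ : ι → Measure β)
    [∀ i, IsProbabilityMeasure (μ i)] {σ : ι → ι} {I : Finset ι}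
    (h : Disjoint I (I.image σ)) :
    IndepFun I.restrict (fun x => I.restrict (x ∘ σ)) (infinitePi μ) := by
  have hcoord : iIndepFun (fun i (x : ι → β) => x i) (infinitePi μ) :=
    iIndepFun_infinitePi (X := fun _ => id) fun _ => measurable_id
  have hmem : ∀ i : I, σ i ∈ I.image σ := fun i => Finset.mem_image_of_mem σ i.2
  exact (hcoord.indepFun_finset I (I.image σ) h measurable_pi_apply).comp (φ := id)
    (ψ := fun (y : I.image σ → β) (i : I) => y ⟨σ i, hmem i⟩) measurable_id (by fun_prop)

lemma measure_cylinder_inter_preimage_blockSwap (ν : Measure β) [IsProbabilityMeasure ν]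
    {n : ℕ} {I : Finset ℕ} (hI : ∀ i ∈ I, i < n) {B : Set (I → β)}
    (hB : MeasurableSet B) :
    infinitePi (fun _ => ν) (cylinder I B ∩ (fun x => x ∘ blockSwap n) ⁻¹' cylinder I B) =
      infinitePi (fun _ => ν) (cylinder I B) * infinitePi (fun _ => ν) (cylinder I B) := by
  have hind : IndepFun I.restrict (fun x => I.restrict (x ∘ blockSwap n))
      (infinitePi fun _ => ν) :=
    indepFun_restrict_restrict_comp _ (disjoint_image_blockSwap hI)
  exact (hind.measure_inter_preimage_eq_mul _ _ hB hB).trans <| congrArg (_ * ·) <|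
    (measurePreserving_comp_perm ν (blockSwap n)).measure_preimage
      (hB.cylinder (α := fun _ => β) I).nullMeasurableSet

theorem measure_eq_zero_or_one_of_ae_blockSwap_invariant (ν : Measure β) [IsProbabilityMeasure ν]
    {S : Set (ℕ → β)} (hS : MeasurableSet S)
    (hinv : ∀ n, (fun x => x ∘ blockSwap n) ⁻¹' S =ᵐ[infinitePi fun _ => ν] S) :
    infinitePi (fun _ => ν) S = 0 ∨ infinitePi (fun _ => ν) S = 1 := by
  have hdense : (infinitePi fun _ => ν).MeasureDense (measurableCylinders fun _ : ℕ => β) :=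
    .of_generateFrom_isSetAlgebra_finite _ isSetAlgebra_measurableCylinders
      generateFrom_measurableCylinders.symm
  refine measure_eq_zero_or_one_of_forall_approx hS fun ε hε => ?_
  obtain ⟨A, hA, hSA⟩ := hdense.approx S hS (measure_ne_top _ S) ε hε
  obtain ⟨I, B, hB, rfl⟩ := (mem_measurableCylinders _).mp hA
  have hI : ∀ i ∈ I, i < I.sup id + 1 := fun i hi =>
    Nat.lt_succ_of_le (Finset.le_sup (f := id) hi)
  exact ⟨cylinder I B, _, hdense.measurable _ hA, ENNReal.toReal_le_of_le_ofReal hε.le hSA.le,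
    measurePreserving_comp_perm ν _, hinv _, measure_cylinder_inter_preimage_blockSwap ν hI hB⟩

end InfinitePi

section LePage

open Finset

variable {E : Type*} {α : ℝ} {k : ℕ} {f : (Fin k → E) → ℝ≥0∞}

/-- `Γ_j`, read off the sequence `x l = (E_l, T_l)`. -/
def arrivalTime (x : ℕ → ℝ × E) (j : ℕ) : ℝ := ∑ l ∈ range (j + 1), (x l).1

lemma measurable_arrivalTime [MeasurableSpace E] (j : ℕ) :
    Measurable fun x : ℕ → ℝ × E => arrivalTime x j :=
  Finset.measurable_sum _ fun _ _ => by fun_prop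

noncomputable def lePageSup (α : ℝ) (k : ℕ) (f : (Fin k → E) → ℝ≥0∞) (x : ℕ → ℝ × E) :
    ℝ≥0∞ :=
  ⨆ j : {j : Fin k → ℕ // Function.Injective j},
    f (fun i => (x (j.1 i)).2) * (∏ i, ENNReal.ofReal (arrivalTime x (j.1 i))) ^ (-(1 / α))

lemma exists_pos_mul_arrivalTime_le (σ : Equiv.Perm ℕ) {N : ℕ}
    (hσ : ∀ m, N ≤ m → σ m = m) {x : ℕ → ℝ × E} (hx : ∀ l, 0 < (x l).1) :
    ∃ c > 0, ∀ j, c * arrivalTime x (σ j) ≤ arrivalTime (x ∘ σ) j := by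
  have hΓ_nonneg : ∀ j, 0 ≤ arrivalTime x j := fun j => sum_nonneg fun l _ => (hx l).le
  have hC : 0 < arrivalTime x N := sum_pos (fun l _ => hx l) nonempty_range_add_one
  -- For `j < N`, `σ j < N` too, and both sides are compared with the single term `(x (σ 0)).1`;
  -- for `N ≤ j`, `σ` permutes `range (j + 1)` and the two sums coincide.
  refine ⟨min 1 ((x (σ 0)).1 / arrivalTime x N), lt_min one_pos (div_pos (hx _) hC),
    fun j => ?_⟩
  rcases lt_or_ge j N with hj | hj
  · have hσj : σ j < N := by
      by_contra! h
      exact hj.not_ge (σ.injective (hσ _ h) ▸ h)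
    calc min 1 ((x (σ 0)).1 / arrivalTime x N) * arrivalTime x (σ j)
        ≤ (x (σ 0)).1 / arrivalTime x N * arrivalTime x N :=
          mul_le_mul (min_le_right _ _) (sum_le_sum_of_subset_of_nonneg
            (range_subset_range.mpr (by omega)) fun l _ _ => (hx l).le)
            (hΓ_nonneg _) (div_pos (hx _) hC).le
      _ = (x (σ 0)).1 := div_mul_cancel₀ _ hC.ne'
      _ ≤ arrivalTime (x ∘ σ) j :=
          single_le_sum (f := fun l => (x (σ l)).1) (fun l _ => (hx _).le)
            (mem_range.mpr j.succ_pos)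
  · have hsupp : {m | σ m ≠ m} ⊆ (Finset.range (j + 1) : Set ℕ) := fun m hm =>
      mem_range.mpr (by by_contra h; exact hm (hσ m (by omega)))
    rw [hσ j hj, arrivalTime, arrivalTime, ← σ.sum_comp _ _ hsupp]
    exact mul_le_of_le_one_left (sum_nonneg fun l _ => (hx _).le) (min_le_left _ _)

lemma lePageSup_comp_perm_le (hα : 0 < α) (σ : Equiv.Perm ℕ) {N : ℕ}
    (hσ : ∀ m, N ≤ m → σ m = m) {x : ℕ → ℝ × E} (hx : ∀ l, 0 < (x l).1) :
    ∃ K ≠ ⊤, lePageSup α k f (x ∘ σ) ≤ K * lePageSup α k f x := by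
  obtain ⟨c, hc, hcΓ⟩ := exists_pos_mul_arrivalTime_le σ hσ hx
  have hck : ENNReal.ofReal c ^ k ≠ ⊤ := ENNReal.pow_ne_top ENNReal.ofReal_ne_top
  refine ⟨(ENNReal.ofReal c ^ k) ^ (-(1 / α)), ?_, iSup_le fun j => ?_⟩
  · rw [ENNReal.rpow_neg, Ne, ENNReal.inv_eq_top]
    exact (ENNReal.rpow_pos (ENNReal.pow_pos (ENNReal.ofReal_pos.mpr hc) k) hck).ne'
  have hprod : ENNReal.ofReal c ^ k * ∏ i, ENNReal.ofReal (arrivalTime x (σ (j.1 i)))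
      ≤ ∏ i, ENNReal.ofReal (arrivalTime (x ∘ σ) (j.1 i)) := by
    rw [show ENNReal.ofReal c ^ k = ∏ _i : Fin k, ENNReal.ofReal c by simp, ← prod_mul_distrib]
    refine prod_le_prod' fun i _ => ?_
    rw [← ENNReal.ofReal_mul hc.le]
    exact ENNReal.ofReal_le_ofReal (hcΓ _)
  have hweight : (∏ i, ENNReal.ofReal (arrivalTime (x ∘ σ) (j.1 i))) ^ (-(1 / α))
      ≤ (ENNReal.ofReal c ^ k) ^ (-(1 / α)) *
        (∏ i, ENNReal.ofReal (arrivalTime x (σ (j.1 i)))) ^ (-(1 / α)) := by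
    rw [← ENNReal.mul_rpow_of_ne_top hck (ENNReal.prod_ne_top fun _ _ => ENNReal.ofReal_ne_top),
      ENNReal.rpow_neg, ENNReal.rpow_neg]
    exact ENNReal.inv_le_inv.mpr (ENNReal.rpow_le_rpow hprod (by positivity))
  calc f (fun i => (x (σ (j.1 i))).2) *
        (∏ i, ENNReal.ofReal (arrivalTime (x ∘ σ) (j.1 i))) ^ (-(1 / α))
      ≤ (ENNReal.ofReal c ^ k) ^ (-(1 / α)) * (f (fun i => (x (σ (j.1 i))).2) *
        (∏ i, ENNReal.ofReal (arrivalTime x (σ (j.1 i)))) ^ (-(1 / α))) := by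
        grw [hweight]; exact (mul_left_comm _ _ _).le
    _ ≤ (ENNReal.ofReal c ^ k) ^ (-(1 / α)) * lePageSup α k f x := by
        gcongr
        exact le_iSup (fun j : {j : Fin k → ℕ // Function.Injective j} =>
          f (fun i => (x (j.1 i)).2) *
            (∏ i, ENNReal.ofReal (arrivalTime x (j.1 i))) ^ (-(1 / α)))
          ⟨σ ∘ j.1, σ.injective.comp j.2⟩

lemma lePageSup_comp_perm_lt_top (hα : 0 < α) (σ : Equiv.Perm ℕ) {N : ℕ}
    (hσ : ∀ m, N ≤ m → σ m = m) {x : ℕ → ℝ × E} (hx : ∀ l, 0 < (x l).1)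
    (h : lePageSup α k f x < ⊤) : lePageSup α k f (x ∘ σ) < ⊤ := by
  obtain ⟨K, hK, hle⟩ := lePageSup_comp_perm_le hα σ hσ hx
  exact hle.trans_lt (ENNReal.mul_lt_top hK.lt_top h)

variable [MeasurableSpace E]

lemma measurable_lePageSup (hf : Measurable f) : Measurable (lePageSup α k f) :=
  Measurable.iSup fun j => (hf.comp (by fun_prop)).mul <| (Finset.measurable_prod _ fun i _ =>
    ENNReal.measurable_ofReal.comp (measurable_arrivalTime (j.1 i))).pow_const _

lemma ae_preimage_comp_perm_lePageSup_lt_top (hα : 0 < α) {μ : Measure (ℕ → ℝ × E)}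
    (hpos : ∀ᵐ x ∂μ, ∀ l, 0 < (x l).1) (σ : Equiv.Perm ℕ) {N : ℕ}
    (hσ : ∀ m, N ≤ m → σ m = m) :
    (fun x => x ∘ σ) ⁻¹' {x | lePageSup α k f x < ⊤}
      =ᵐ[μ] {x | lePageSup α k f x < ⊤} := by
  have hσ' : ∀ m, N ≤ m → σ.symm m = m := fun m hm => σ.symm_apply_eq.mpr (hσ m hm).symm
  refine eventuallyEq_set.mpr (hpos.mono fun x hx => ⟨fun h => ?_,
    lePageSup_comp_perm_lt_top hα σ hσ hx⟩)
  have hinv : (x ∘ σ) ∘ σ.symm = x := by ext1 l; simp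
  have := lePageSup_comp_perm_lt_top hα σ.symm hσ' (x := x ∘ σ) (fun l => hx (σ l)) h
  rwa [hinv] at this

end LePage

theorem stmt12_general {Ω E : Type*} [MeasurableSpace Ω] [MeasurableSpace E]
    (P : Measure Ω) [IsProbabilityMeasure P] (m : Measure E)
    (α : ℝ) (hα : 0 < α) (k : ℕ)
    (f : (Fin k → E) → ℝ≥0∞) (hfmeas : Measurable f)
    (Eseq : ℕ → Ω → ℝ) (T : ℕ → Ω → E)
    (hEmeas : ∀ j, Measurable (Eseq j)) (hTmeas : ∀ j, Measurable (T j))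
    (hEindep : iIndepFun Eseq P)
    (hTindep : iIndepFun T P)
    (hET : IndepFun (fun ω j => Eseq j ω) (fun ω j => T j ω) P)
    (hExp : ∀ j, ∀ x : ℝ, 0 ≤ x →
      P {ω | Eseq j ω ≤ x} = ENNReal.ofReal (1 - Real.exp (-x)))
    (hTlaw : ∀ j, Measure.map (T j) P = m)
    (Γ : ℕ → Ω → ℝ) (hΓ : ∀ j ω, Γ j ω = ∑ i ∈ Finset.range (j + 1), Eseq i ω) :
    P {ω | (⨆ j : {j : Fin k → ℕ // Function.Injective j},
        f (fun i => T (j.1 i) ω) *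
          (∏ i, ENNReal.ofReal (Γ (j.1 i) ω)) ^ (-(1 / α))) < ⊤} = 0 ∨
    P {ω | (⨆ j : {j : Fin k → ℕ // Function.Injective j},
        f (fun i => T (j.1 i) ω) *
          (∏ i, ENNReal.ofReal (Γ (j.1 i) ω)) ^ (-(1 / α))) < ⊤} = 1 := by
  set Z : Ω → ℕ → ℝ × E := fun ω l => (Eseq l ω, T l ω)
  have hZm : Measurable Z := measurable_pi_lambda _ fun l => (hEmeas l).prodMk (hTmeas l)
  have := Measure.isProbabilityMeasure_map (μ := P) (hEmeas 0).aemeasurable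
  have := Measure.isProbabilityMeasure_map (μ := P) (hTmeas 0).aemeasurable
  have hlaw : P.map Z = Measure.infinitePi fun _ => (P.map (Eseq 0)).prod (P.map (T 0)) :=
    map_prodMk_eq_infinitePi hEmeas hTmeas hEindep hTindep hET
      (fun l => map_eq_map_of_exponential_cdf (hEmeas l) (hEmeas 0) (hExp l) (hExp 0))
      (fun l => (hTlaw l).trans (hTlaw 0).symm)
  have hpos : ∀ᵐ x ∂P.map Z, ∀ l, 0 < (x l).1 := ae_all_iff.mpr fun l =>
    (ae_map_iff hZm.aemeasurable (measurableSet_lt measurable_const (by fun_prop))).mpr <|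
      ae_iff.mpr <| by simpa [not_lt] using hExp l 0 le_rfl
  set S := {x | lePageSup α k f x < ⊤}
  have hS : MeasurableSet S := measurableSet_lt (measurable_lePageSup hfmeas) measurable_const
  have hevent : {ω | (⨆ j : {j : Fin k → ℕ // Function.Injective j},
      f (fun i => T (j.1 i) ω) * (∏ i, ENNReal.ofReal (Γ (j.1 i) ω)) ^ (-(1 / α))) < ⊤} =
      Z ⁻¹' S := by
    ext ω; simp only [hΓ]; rfl
  have hinv n : (fun x => x ∘ blockSwap n) ⁻¹' S =ᵐ[P.map Z] S :=
    ae_preimage_comp_perm_lePageSup_lt_top hα hpos _ fun _ => blockSwap_apply_of_le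
  rw [hevent, ← Measure.map_apply hZm hS]
  rw [hlaw] at hinv ⊢
  exact measure_eq_zero_or_one_of_ae_blockSwap_invariant _ hS hinv

/-- Zero-one law for finiteness of the LePage supremum of a multiple extremal integral:
with `(Γ_j)` unit-rate Poisson arrival times independent of the i.i.d. sequence `(T_j)`,
and `f : E^k → [0,∞]` measurable vanishing on the diagonals, the event
`{⋁_{j ∈ 𝓓_k} f(T_{j_1},…,T_{j_k}) (Γ_{j_1}⋯Γ_{j_k})^{-1/α} < ∞}`
has probability `0` or `1`. -/
theorem stmt12 {Ω E : Type*} [MeasurableSpace Ω] [MeasurableSpace E]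
    (P : Measure Ω) [IsProbabilityMeasure P] (m : Measure E) [IsProbabilityMeasure m]
    (α : ℝ) (hα : 0 < α) (k : ℕ) (hk : 0 < k)
    (f : (Fin k → E) → ℝ≥0∞) (hfmeas : Measurable f)
    (hdiag : ∀ u : Fin k → E, (∃ i j : Fin k, i ≠ j ∧ u i = u j) → f u = 0)
    (Eseq : ℕ → Ω → ℝ) (T : ℕ → Ω → E)
    (hEmeas : ∀ j, Measurable (Eseq j)) (hTmeas : ∀ j, Measurable (T j))
    (hEindep : iIndepFun Eseq P)
    (hTindep : iIndepFun T P)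
    (hET : IndepFun (fun ω j => Eseq j ω) (fun ω j => T j ω) P)
    (hExp : ∀ j, ∀ x : ℝ, 0 ≤ x →
      P {ω | Eseq j ω ≤ x} = ENNReal.ofReal (1 - Real.exp (-x)))
    (hTlaw : ∀ j, Measure.map (T j) P = m)
    (Γ : ℕ → Ω → ℝ) (hΓ : ∀ j ω, Γ j ω = ∑ i ∈ Finset.range (j + 1), Eseq i ω) :
    P {ω | (⨆ j : {j : Fin k → ℕ // Function.Injective j},
        f (fun i => T (j.1 i) ω) *
          (∏ i, ENNReal.ofReal (Γ (j.1 i) ω)) ^ (-(1 / α))) < ⊤} = 0 ∨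
    P {ω | (⨆ j : {j : Fin k → ℕ // Function.Injective j},
        f (fun i => T (j.1 i) ω) *
          (∏ i, ENNReal.ofReal (Γ (j.1 i) ω)) ^ (-(1 / α))) < ⊤} = 1 :=
  stmt12_general P m α hα k f hfmeas Eseq T hEmeas hTmeas hEindep hTindep hET hExp hTlaw Γ hΓ
end

section
/- Let α > 0, let (a_i)_{i≥1} be a sequence with 0 < a_i < 1, Σ a_i^k < ∞ and Σ a_i^k |ln a_i|^{k-1} = ∞ for some k ≥ 2, and let (M_i)_{i≥1} be i.i.d. standard α-Fréchet random variables. Then ⋁_{i≥1} a_i^{k/α} M_{ki} M_{ki+1} ⋯ M_{ki+k-1} = ∞ almost surely. -/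
/-!
Write `k = q + 1` and `Π_i = M_{ki} ⋯ M_{ki+q}`. Cut the range of the first `q` factors into
the log-scale cells `∏_t (e^{v_t}, e^{v_t+1}]`. On cell `v` the product exceeds `x` as soon as
the last factor exceeds `x e^{-∑ v}`; the cell has probability `≳ e^{-α ∑ v}` and that tail
`≳ x^{-α} e^{α ∑ v}`, so each of the `≈ (log x / k)^q` cells with `∑ v ≤ log x` contributes
`≳ x^{-α}`, and `P(Π_i > x) ≳ x^{-α} (log x)^q`. For `x = r a_i^{-k/α}` this is
`≳ a_i^k |log a_i|^{k-1}`, which is not summable. The blocks are independent, so by the second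
Borel–Cantelli lemma `a_i^{k/α} Π_i > r` for infinitely many `i`, almost surely, for every `r`.
-/

open MeasureTheory Filter ProbabilityTheory Set Real
open scoped ENNReal

namespace ProbabilityTheory
open Function
variable {Ω ι κ : Type*} {mΩ : MeasurableSpace Ω} {μ : Measure Ω} {m : ι → MeasurableSpace Ω}

theorem iIndep.iIndep_biSup_of_pairwise_disjoint (h_le : ∀ i, m i ≤ mΩ) (h : iIndep m μ)
    {S : κ → Set ι} (hS : Pairwise (Disjoint on S)) :
    iIndep (fun b => ⨆ i ∈ S b, m i) μ := by
  classical
  have := h.isProbabilityMeasure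
  refine (iIndep_iff _ μ).2 fun s => ?_
  induction s using Finset.induction_on with
  | empty => simp
  | insert a s ha ih =>
    intro f hf
    have hdisj : Disjoint (S a) (⋃ b ∈ s, S b) :=
      disjoint_iUnion₂_right.2 fun b hb => hS (ne_of_mem_of_not_mem hb ha).symm
    have hs : MeasurableSet[⨆ i ∈ ⋃ b ∈ s, S b, m i] (⋂ b ∈ s, f b) :=
      Finset.measurableSet_biInter _ fun b hb =>
        biSup_mono (f := m) (fun _ hi => mem_biUnion hb hi) _ (hf b (Finset.mem_insert_of_mem hb))
    rw [Finset.set_biInter_insert, Finset.prod_insert ha,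
      ← ih fun b hb => hf b (Finset.mem_insert_of_mem hb)]
    exact (Indep_iff _ _ μ).1 (indep_iSup_of_disjoint h_le h hdisj) _ _
      (hf a (Finset.mem_insert_self a s)) hs

theorem iIndep.iIndepSet {s : ι → Set Ω} (h : iIndep m μ) (hsm : ∀ i, MeasurableSet[m i] (s i))
    (hs : ∀ i, MeasurableSet (s i)) : iIndepSet s μ :=
  (iIndepSet_iff_meas_biInter hs).2 fun _ => h.meas_biInter fun i _ => hsm i

end ProbabilityTheory

lemma mul_sub_le_exp_neg_sub_exp_neg {s u : ℝ} (hsu : s ≤ u) (hu : u ≤ 1) :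
    exp (-1) * (u - s) ≤ exp (-s) - exp (-u) := by
  have h1 : exp (-1) ≤ exp (-u) := exp_le_exp.2 (by linarith)
  have h2 : u - s ≤ exp (u - s) - 1 := by linarith [add_one_le_exp (u - s)]
  calc exp (-1) * (u - s) ≤ exp (-u) * (exp (u - s) - 1) :=
        mul_le_mul h1 h2 (by linarith) (exp_pos _).le
    _ = exp (-s) - exp (-u) := by rw [mul_sub, ← exp_add]; ring_nf

lemma exp_neg_one_mul_one_sub_exp_neg_pos {α : ℝ} (hα : 0 < α) :
    0 < exp (-1) * (1 - exp (-α)) :=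
  mul_pos (exp_pos _) (sub_pos.2 (exp_lt_one_iff.2 (by linarith)))

def IsStdFrechet {Ω : Type*} [MeasurableSpace Ω] (α : ℝ) (P : Measure Ω) (X : Ω → ℝ) : Prop :=
  ∀ x : ℝ, 0 < x → P (X ⁻¹' Iic x) = ENNReal.ofReal (exp (-(x ^ (-α))))

namespace IsStdFrechet
variable {Ω : Type*} [MeasurableSpace Ω] {P : Measure Ω} [IsProbabilityMeasure P] {α : ℝ}
  {X : Ω → ℝ}

lemma measure_preimage_Ioc (h : IsStdFrechet α P X) (hX : Measurable X) {a b : ℝ} (ha : 0 < a)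
    (hab : a ≤ b) :
    P (X ⁻¹' Ioc a b) = ENNReal.ofReal (exp (-(b ^ (-α))) - exp (-(a ^ (-α)))) := by
  rw [← Iic_sdiff_Iic, preimage_sdiff, measure_sdiff (preimage_mono (Iic_subset_Iic.2 hab))
    (hX measurableSet_Iic).nullMeasurableSet (measure_ne_top _ _), h a ha, h b (ha.trans_le hab),
    ENNReal.ofReal_sub _ (exp_pos _).le]

lemma measure_preimage_Ioi (h : IsStdFrechet α P X) (hX : Measurable X) {a : ℝ} (ha : 0 < a) :
    P (X ⁻¹' Ioi a) = ENNReal.ofReal (1 - exp (-(a ^ (-α)))) := by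
  rw [← compl_Iic, preimage_compl, prob_compl_eq_one_sub (hX measurableSet_Iic), h a ha,
    ← ENNReal.ofReal_one, ENNReal.ofReal_sub _ (exp_pos _).le]

lemma ofReal_le_measure_preimage_Ioi (hα : 0 < α) (h : IsStdFrechet α P X) (hX : Measurable X)
    {y : ℝ} (hy : 1 ≤ y) : ENNReal.ofReal (exp (-1) * y ^ (-α)) ≤ P (X ⁻¹' Ioi y) := by
  rw [h.measure_preimage_Ioi hX (by linarith)]
  refine ENNReal.ofReal_le_ofReal ?_
  simpa using mul_sub_le_exp_neg_sub_exp_neg (rpow_nonneg (by linarith) (-α))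
    (rpow_le_one_of_one_le_of_nonpos hy (by linarith))

lemma ofReal_le_measure_preimage_Ioc_exp (hα : 0 < α) (h : IsStdFrechet α P X)
    (hX : Measurable X) {m : ℝ} (hm : 0 ≤ m) :
    ENNReal.ofReal (exp (-1) * (1 - exp (-α)) * exp (-α * m)) ≤
      P (X ⁻¹' Ioc (exp m) (exp (m + 1))) := by
  have hs : (m + 1) * -α = -α * m + -α := by ring
  rw [h.measure_preimage_Ioc hX (exp_pos m) (exp_le_exp.2 (by linarith)), ← exp_mul, ← exp_mul,
    hs, exp_add, mul_comm m]
  refine ENNReal.ofReal_le_ofReal ?_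
  convert mul_sub_le_exp_neg_sub_exp_neg (s := exp (-α * m) * exp (-α)) (u := exp (-α * m))
    (mul_le_of_le_one_right (exp_pos _).le (exp_le_one_iff.2 (by linarith)))
    (exp_le_one_iff.2 (by nlinarith)) using 1
  ring

end IsStdFrechet

section ProductTail
variable {Ω : Type*} [MeasurableSpace Ω] {P : Measure Ω} [IsProbabilityMeasure P] {α : ℝ}
  {q : ℕ} {X : Fin (q + 1) → Ω → ℝ}

def logCell (x : ℝ) (v : Fin q → ℕ) : Fin (q + 1) → Set ℝ :=
  Fin.lastCases (Ioi (x * exp (-∑ t, (v t : ℝ)))) fun t => Ioc (exp (v t)) (exp (v t + 1))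

lemma measurableSet_logCell (x : ℝ) (v : Fin q → ℕ) (t : Fin (q + 1)) :
    MeasurableSet (logCell x v t) := by
  cases t using Fin.lastCases <;> simp [logCell, measurableSet_Ioi, measurableSet_Ioc]

lemma lt_prod_of_mem_logCell {x : ℝ} {v : Fin q → ℕ} {y : Fin (q + 1) → ℝ} (hx : 0 ≤ x)
    (hy : ∀ t, y t ∈ logCell x v t) : x < ∏ t, y t := by
  set S := ∑ t, (v t : ℝ)
  have hlast : x * exp (-S) < y (Fin.last q) := by simpa [logCell] using hy (Fin.last q)
  have hinit : exp S ≤ ∏ t : Fin q, y t.castSucc := by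
    rw [exp_sum]
    refine Finset.prod_le_prod (fun t _ => (exp_pos _).le) fun t _ => ?_
    have hyt := hy t.castSucc
    simp only [logCell, Fin.lastCases_castSucc, mem_Ioc] at hyt
    exact hyt.1.le
  calc x = exp S * (x * exp (-S)) := by
        rw [mul_left_comm, ← exp_add, add_neg_cancel, exp_zero, mul_one]
    _ < _ := by
      rw [Fin.prod_univ_castSucc]
      exact mul_lt_mul' hinit hlast (by positivity) ((exp_pos _).trans_le hinit)

lemma disjoint_logCell {x : ℝ} {v w : Fin q → ℕ} (hvw : v ≠ w) :
    ∃ t, Disjoint (logCell x v t) (logCell x w t) := by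
  obtain ⟨t, ht⟩ := Function.ne_iff.1 hvw
  refine ⟨t.castSucc, ?_⟩
  simpa [logCell] using (exp_monotone.comp Nat.mono_cast).pairwise_disjoint_on_Ioc_succ ht

lemma ofReal_le_measure_logCell (hα : 0 < α) (hX : ∀ t, Measurable (X t))
    (hind : iIndepFun X P) (hF : ∀ t, IsStdFrechet α P (X t)) {x : ℝ} (hx : 0 < x)
    {v : Fin q → ℕ} (hv : ∑ t, (v t : ℝ) ≤ log x) :
    ENNReal.ofReal ((exp (-1) * (1 - exp (-α))) ^ q * (exp (-1) * x ^ (-α))) ≤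
      P (⋂ t, X t ⁻¹' logCell x v t) := by
  set S := ∑ t, (v t : ℝ)
  have hc := (exp_neg_one_mul_one_sub_exp_neg_pos hα).le
  have hy : 1 ≤ x * exp (-S) := by
    rw [← exp_log hx, ← exp_add]
    exact one_le_exp (by linarith)
  have hcells : ∏ t : Fin q, (exp (-1) * (1 - exp (-α)) * exp (-α * v t)) =
      (exp (-1) * (1 - exp (-α))) ^ q * exp (-α * S) := by
    rw [Finset.prod_mul_distrib, Finset.prod_const, Finset.card_univ, Fintype.card_fin,
      ← exp_sum, Finset.mul_sum]
  have hlast : (x * exp (-S)) ^ (-α) = x ^ (-α) * exp (α * S) := by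
    rw [mul_rpow hx.le (exp_pos _).le, ← exp_mul]
    ring_nf
  rw [hind.meas_iInter fun t => (comap_measurable (X t)) (measurableSet_logCell x v t),
    Fin.prod_univ_castSucc]
  calc ENNReal.ofReal ((exp (-1) * (1 - exp (-α))) ^ q * (exp (-1) * x ^ (-α)))
      = ENNReal.ofReal (∏ t : Fin q, (exp (-1) * (1 - exp (-α)) * exp (-α * v t))) *
          ENNReal.ofReal (exp (-1) * (x * exp (-S)) ^ (-α)) := by
        have he : exp (-α * S) * exp (α * S) = 1 := by rw [← exp_add]; simp
        rw [← ENNReal.ofReal_mul (Finset.prod_nonneg fun t _ => by positivity), hcells, hlast]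
        congr 1
        linear_combination (-((exp (-1) * (1 - exp (-α))) ^ q * (exp (-1) * x ^ (-α)))) * he
    _ ≤ _ := by
      rw [ENNReal.ofReal_prod_of_nonneg fun t _ => by positivity]
      gcongr with t
      · simpa [logCell] using
          (hF t.castSucc).ofReal_le_measure_preimage_Ioc_exp hα (hX _) (Nat.cast_nonneg (v t))
      · simpa [logCell] using (hF (Fin.last q)).ofReal_le_measure_preimage_Ioi hα (hX _) hy

lemma ofReal_le_measure_lt_prod (hα : 0 < α) (hX : ∀ t, Measurable (X t))
    (hind : iIndepFun X P) (hF : ∀ t, IsStdFrechet α P (X t)) {x : ℝ} (hx : 1 ≤ x) {n : ℕ}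
    (hn : q * n ≤ log x) :
    ENNReal.ofReal ((n + 1) ^ q * ((exp (-1) * (1 - exp (-α))) ^ q * (exp (-1) * x ^ (-α)))) ≤
      P {ω | x < ∏ t, X t ω} := by
  set V := Fintype.piFinset fun _ : Fin q => Finset.range (n + 1)
  set E := fun v : Fin q → ℕ => ⋂ t, X t ⁻¹' logCell x v t
  have hsum : ∀ v ∈ V, ∑ t, (v t : ℝ) ≤ log x := fun v hv => by
    refine le_trans ?_ hn
    simpa using Finset.sum_le_sum fun t (_ : t ∈ Finset.univ) => (Nat.cast_le (α := ℝ)).2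
      (Nat.lt_succ_iff.1 (Finset.mem_range.1 (Fintype.mem_piFinset.1 hv t)))
  have hdisj : PairwiseDisjoint (V : Set (Fin q → ℕ)) E := fun v _ w _ hvw => by
    obtain ⟨t, ht⟩ := disjoint_logCell (x := x) hvw
    exact (ht.preimage (X t)).mono (iInter_subset _ t) (iInter_subset _ t)
  calc ENNReal.ofReal ((n + 1) ^ q * ((exp (-1) * (1 - exp (-α))) ^ q * (exp (-1) * x ^ (-α))))
      = ∑ _v ∈ V, ENNReal.ofReal ((exp (-1) * (1 - exp (-α))) ^ q * (exp (-1) * x ^ (-α))) := by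
        rw [Finset.sum_const, Fintype.card_piFinset_const, Finset.card_range, nsmul_eq_mul,
          ENNReal.ofReal_mul (by positivity)]
        norm_cast
    _ ≤ ∑ v ∈ V, P (E v) := Finset.sum_le_sum fun v hv =>
        ofReal_le_measure_logCell hα hX hind hF (by linarith) (hsum v hv)
    _ = P (⋃ v ∈ V, E v) := (measure_biUnion_finset hdisj fun v _ =>
        MeasurableSet.iInter fun t => hX t (measurableSet_logCell x v t)).symm
    _ ≤ P {ω | x < ∏ t, X t ω} := measure_mono <| iUnion₂_subset fun v _ ω hω =>
        lt_prod_of_mem_logCell (by linarith) (mem_iInter.1 hω)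

lemma ofReal_le_measure_lt_prod_of_one_le (hα : 0 < α) (hX : ∀ t, Measurable (X t))
    (hind : iIndepFun X P) (hF : ∀ t, IsStdFrechet α P (X t)) {x : ℝ} (hx : 1 ≤ x) :
    ENNReal.ofReal ((log x / (q + 1)) ^ q *
      ((exp (-1) * (1 - exp (-α))) ^ q * (exp (-1) * x ^ (-α)))) ≤
      P {ω | x < ∏ t, X t ω} := by
  have hL : 0 ≤ log x := log_nonneg hx
  have hc := (exp_neg_one_mul_one_sub_exp_neg_pos hα).le
  refine le_trans (ENNReal.ofReal_le_ofReal ?_)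
    (ofReal_le_measure_lt_prod hα hX hind hF hx (n := ⌊log x / (q + 1)⌋₊) ?_)
  · gcongr
    exact (Nat.lt_floor_add_one _).le
  · have hn : (q + 1 : ℝ) * ⌊log x / (q + 1)⌋₊ ≤ log x :=
      (le_div_iff₀' (by positivity)).1 (Nat.floor_le (by positivity))
    nlinarith [Nat.cast_nonneg (α := ℝ) ⌊log x / (q + 1)⌋₊]

end ProductTail

section Blocks
variable {Ω : Type*} {M : ℕ → Ω → ℝ}

lemma measurable_prod_block (k i : ℕ) :
    Measurable[⨆ j ∈ Ico (k * i) (k * (i + 1)), (borel ℝ).comap (M j)]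
      fun ω => ∏ t ∈ Finset.range k, M (k * i + t) ω :=
  Finset.measurable_prod _ fun t ht => (comap_measurable (M (k * i + t))).mono
    (le_iSup₂ (f := fun j _ => (borel ℝ).comap (M j)) (k * i + t)
      (by rw [Finset.mem_range] at ht; constructor <;> nlinarith)) le_rfl

variable [MeasurableSpace Ω] {P : Measure Ω}

lemma iIndep_comap_blocks (hM : ∀ j, Measurable (M j)) (hind : iIndepFun M P) (k : ℕ) :
    iIndep (fun i => ⨆ j ∈ Ico (k * i) (k * (i + 1)), (borel ℝ).comap (M j)) P :=
  hind.iIndep.iIndep_biSup_of_pairwise_disjoint (fun j => (hM j).comap_le)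
    (Monotone.pairwise_disjoint_on_Ico_succ fun _ _ h => Nat.mul_le_mul_left k h)

variable [IsProbabilityMeasure P] {α : ℝ} {q : ℕ}

lemma ofReal_le_measure_lt_mul_prod_block (hα : 0 < α) (hM : ∀ j, Measurable (M j))
    (hind : iIndepFun M P) (hF : ∀ j, IsStdFrechet α P (M j)) {r a : ℝ} (hr : 1 ≤ r)
    (ha0 : 0 < a) (ha1 : a < 1) (i : ℕ) :
    ENNReal.ofReal ((|log a| / α) ^ q *
      ((exp (-1) * (1 - exp (-α))) ^ q * (exp (-1) * (r ^ (-α) * a ^ (q + 1))))) ≤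
      P {ω | r < a ^ (((q + 1 : ℕ) : ℝ) / α) *
        ∏ t ∈ Finset.range (q + 1), M ((q + 1) * i + t) ω} := by
  set b := a ^ (((q + 1 : ℕ) : ℝ) / α)
  have hb : 0 < b := rpow_pos_of_pos ha0 _
  have hx : 1 ≤ r / b := (one_le_div hb).2 ((rpow_le_one ha0.le ha1.le (by positivity)).trans hr)
  have hc := (exp_neg_one_mul_one_sub_exp_neg_pos hα).le
  have hxα : (r / b) ^ (-α) = r ^ (-α) * a ^ (q + 1) := by
    rw [div_rpow (by linarith) hb.le, ← rpow_mul ha0.le,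
      show ((q + 1 : ℕ) : ℝ) / α * -α = -((q + 1 : ℕ) : ℝ) by field_simp, rpow_neg ha0.le,
      rpow_natCast, div_inv_eq_mul]
  have hlog : |log a| / α ≤ log (r / b) / (q + 1) := by
    rw [log_div (by linarith) hb.ne', log_rpow ha0, abs_of_neg (log_neg ha0 ha1),
      le_div_iff₀ (by positivity)]
    have := log_nonneg hr
    field_simp
    push_cast
    nlinarith
  have hset : {ω | r < b * ∏ t ∈ Finset.range (q + 1), M ((q + 1) * i + t) ω} =
      {ω | r / b < ∏ t : Fin (q + 1), M ((q + 1) * i + t) ω} := by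
    ext ω
    rw [mem_ofPred_eq, mem_ofPred_eq, div_lt_iff₀' hb,
      Fin.prod_univ_eq_prod_range (fun t => M ((q + 1) * i + t) ω)]
  rw [hset]
  refine le_trans (ENNReal.ofReal_le_ofReal ?_) (ofReal_le_measure_lt_prod_of_one_le hα
    (X := fun t : Fin (q + 1) => M ((q + 1) * i + t)) (fun t => hM _)
    (hind.precomp fun s t hst => Fin.val_injective (by simpa using hst)) (fun t => hF _) hx)
  rw [hxα]
  gcongr

lemma tsum_measure_lt_mul_prod_block_eq_top (hα : 0 < α) (hM : ∀ j, Measurable (M j))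
    (hind : iIndepFun M P) (hF : ∀ j, IsStdFrechet α P (M j)) {a : ℕ → ℝ}
    (ha : ∀ i, 0 < a i ∧ a i < 1) (hdiv : ¬ Summable fun i => a i ^ (q + 1) * |log (a i)| ^ q)
    {r : ℝ} (hr : 1 ≤ r) :
    ∑' i, P {ω | r < a i ^ (((q + 1 : ℕ) : ℝ) / α) *
      ∏ t ∈ Finset.range (q + 1), M ((q + 1) * i + t) ω} = ∞ := by
  have hc := exp_neg_one_mul_one_sub_exp_neg_pos hα
  set C := ((exp (-1) * (1 - exp (-α))) / α) ^ q * (exp (-1) * r ^ (-α)) with hCdef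
  have hC : 0 < C := by positivity
  by_contra h
  refine hdiv (((ENNReal.summable_toReal h).div_const C).of_nonneg_of_le
    (fun i => by have := (ha i).1; positivity) fun i => ?_)
  rw [le_div_iff₀' hC, ← ENNReal.ofReal_le_iff_le_toReal (measure_ne_top _ _)]
  convert ofReal_le_measure_lt_mul_prod_block hα hM hind hF hr (ha i).1 (ha i).2 i using 2
  rw [hCdef, div_pow, div_pow]
  ring

lemma ae_exists_lt_mul_prod_block (hα : 0 < α) (hM : ∀ j, Measurable (M j))
    (hind : iIndepFun M P) (hF : ∀ j, IsStdFrechet α P (M j)) {a : ℕ → ℝ}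
    (ha : ∀ i, 0 < a i ∧ a i < 1) (hdiv : ¬ Summable fun i => a i ^ (q + 1) * |log (a i)| ^ q)
    {r : ℝ} (hr : 1 ≤ r) :
    ∀ᵐ ω ∂P, ∃ i, r < a i ^ (((q + 1 : ℕ) : ℝ) / α) *
      ∏ t ∈ Finset.range (q + 1), M ((q + 1) * i + t) ω := by
  set A := fun i => {ω | r < a i ^ (((q + 1 : ℕ) : ℝ) / α) *
      ∏ t ∈ Finset.range (q + 1), M ((q + 1) * i + t) ω}
  have hA : ∀ i, MeasurableSet[⨆ j ∈ Ico ((q + 1) * i) ((q + 1) * (i + 1)),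
      (borel ℝ).comap (M j)] (A i) :=
    fun i => ((measurable_prod_block (q + 1) i).const_mul _) measurableSet_Ioi
  have hA' : ∀ i, MeasurableSet (A i) := fun i => iSup₂_le (fun j _ => (hM j).comap_le) _ (hA i)
  have hlimsup : P (limsup A atTop) = 1 := measure_limsup_eq_one hA'
    ((iIndep_comap_blocks hM hind (q + 1)).iIndepSet hA hA')
    (tsum_measure_lt_mul_prod_block_eq_top hα hM hind hF ha hdiv hr)
  have hae : ∀ᵐ ω ∂P, ω ∈ limsup A atTop :=
    (ae_mem_iff_measure_eq (MeasurableSet.measurableSet_limsup hA').nullMeasurableSet).2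
      (by rw [hlimsup, measure_univ])
  filter_upwards [hae] with ω hω
  exact (mem_limsup_iff_frequently_mem.1 hω).exists

end Blocks

theorem stmt14_general {Ω : Type*} [MeasurableSpace Ω] (P : Measure Ω) [IsProbabilityMeasure P]
    (α : ℝ) (hα : 0 < α) (k : ℕ) (hk : 2 ≤ k)
    (a : ℕ → ℝ) (ha : ∀ i, 0 < a i ∧ a i < 1)
    (hdiv : ¬ Summable (fun i => a i ^ k * |Real.log (a i)| ^ (k - 1)))
    (M : ℕ → Ω → ℝ) (hmeas : ∀ i, Measurable (M i))
    (hindep : iIndepFun M P)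
    (hfrechet : ∀ i, ∀ x : ℝ, 0 < x →
      P {ω | M i ω ≤ x} = ENNReal.ofReal (Real.exp (-(x ^ (-α))))) :
    ∀ᵐ ω ∂P, ¬ BddAbove (Set.range fun i : ℕ =>
      a i ^ ((k : ℝ) / α) * ∏ t ∈ Finset.range k, M (k * i + t) ω) := by
  obtain ⟨q, rfl⟩ : ∃ q, k = q + 1 := ⟨k - 1, by omega⟩
  rw [Nat.add_sub_cancel] at hdiv
  have hunbdd : ∀ m : ℕ, ∀ᵐ ω ∂P, ∃ i, (m : ℝ) + 1 < a i ^ (((q + 1 : ℕ) : ℝ) / α) *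
      ∏ t ∈ Finset.range (q + 1), M ((q + 1) * i + t) ω := fun m =>
    ae_exists_lt_mul_prod_block hα hmeas hindep hfrechet ha hdiv
      (le_add_of_nonneg_left m.cast_nonneg)
  filter_upwards [ae_all_iff.2 hunbdd] with ω hω ⟨c, hc⟩
  obtain ⟨i, hi⟩ := hω ⌈c⌉₊
  linarith [hc (mem_range_self i), Nat.le_ceil c]

/-- If `0 < a_i < 1`, `∑ a_i^k < ∞` and `∑ a_i^k |ln a_i|^{k-1} = ∞` for some `k ≥ 2`,
and `(M_i)` are i.i.d. standard `α`-Fréchet, then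
`⋁_i a_i^{k/α} M_{ki} M_{ki+1} ⋯ M_{ki+k-1} = ∞` almost surely. -/
theorem stmt14 {Ω : Type*} [MeasurableSpace Ω] (P : Measure Ω) [IsProbabilityMeasure P]
    (α : ℝ) (hα : 0 < α) (k : ℕ) (hk : 2 ≤ k)
    (a : ℕ → ℝ) (ha : ∀ i, 0 < a i ∧ a i < 1)
    (hsum : Summable (fun i => a i ^ k))
    (hdiv : ¬ Summable (fun i => a i ^ k * |Real.log (a i)| ^ (k - 1)))
    (M : ℕ → Ω → ℝ) (hmeas : ∀ i, Measurable (M i))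
    (hindep : iIndepFun M P)
    (hfrechet : ∀ i, ∀ x : ℝ, 0 < x →
      P {ω | M i ω ≤ x} = ENNReal.ofReal (Real.exp (-(x ^ (-α))))) :
    ∀ᵐ ω ∂P, ¬ BddAbove (Set.range fun i : ℕ =>
      a i ^ ((k : ℝ) / α) * ∏ t ∈ Finset.range k, M (k * i + t) ω) :=
  stmt14_general P α hα k hk a ha hdiv M hmeas hindep hfrechet
end
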